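/- arXiv:2203.10497 — 2 statements merged into one kernel-verified Lean document; each statement's English description precedes it below -/
import Mathlib

section
/- Let y_d : [0,T] → ℝ^q be continuously differentiable, Υ ∈ ℝ^{p×q}, u₀ : [0,T] → ℝ^p continuous, and let the sequence of inputs be generated by the D-type ILC iteration u_{k+1}(t) = u_k(t) + Υ·(y_d′(t) − z(u_k)(t)). If every complex eigenvalue of I_p − Υ·C·B has modulus strictly less than 1, then there exists a continuous u_∞ : [0,T] → ℝ^p such that u_k converges to u_∞ uniformly on [0,T], and the outputs y(u_k) converge uniformly on [0,T] to y(u_∞). -/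
open MeasureTheory Set Filter intervalIntegral
open scoped Matrix NNReal ENNReal

namespace ILCAux

/-! ### Auxiliary lemmas for the D-type ILC convergence theorem -/

theorem mulVec_norm_le_complex {a b : ℕ} (N : Matrix (Fin a) (Fin b) ℝ) (x : Fin b → ℝ) :
    letI := Matrix.linftyOpNormedAddCommGroup (m := Fin a) (n := Fin b) (α := ℂ)
    ‖N.mulVec x‖ ≤ ‖N.map Complex.ofReal‖ * ‖x‖ := by
  letI := Matrix.linftyOpNormedAddCommGroup (m := Fin a) (n := Fin b) (α := ℂ)
  have h1 : ‖N.mulVec x‖ = ‖(N.map Complex.ofReal).mulVec (fun i => (x i : ℂ))‖ := by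
    simp only [Pi.norm_def, Pi.nnnorm_def]
    congr 1
    apply Finset.sup_congr rfl
    intro i _
    have : (N.map Complex.ofReal).mulVec (fun i => (x i : ℂ)) i = ((N.mulVec x i : ℝ) : ℂ) := by
      simp [Matrix.mulVec, dotProduct, Matrix.map_apply]
    rw [this, Complex.nnnorm_real]
  have h2 : ‖(fun i => (x i : ℂ))‖ = ‖x‖ := by
    simp only [Pi.norm_def, Pi.nnnorm_def]
    congr 1
    apply Finset.sup_congr rfl
    intro i _
    exact Complex.nnnorm_real _
  rw [h1, ← h2]
  exact Matrix.linfty_opNorm_mulVec _ _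

theorem geom_bound {p : ℕ} (M : Matrix (Fin p) (Fin p) ℝ)
    (hspec : ∀ μ ∈ spectrum ℂ (M.map Complex.ofReal), ‖μ‖ < 1) :
    ∃ c r : ℝ, 0 < c ∧ 0 < r ∧ r < 1 ∧
      ∀ (k : ℕ) (x : Fin p → ℝ), ‖(M ^ k).mulVec x‖ ≤ c * r ^ k * ‖x‖ := by
  letI := Matrix.linftyOpNormedAddCommGroup (m := Fin p) (n := Fin p) (α := ℂ)
  letI := Matrix.linftyOpNormedRing (n := Fin p) (α := ℂ)
  letI := Matrix.linftyOpNormedAlgebra (n := Fin p) (R := ℂ) (α := ℂ)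
  set Mc : Matrix (Fin p) (Fin p) ℂ := M.map Complex.ofReal with hMc
  have hmap : ∀ k : ℕ, (M ^ k).map Complex.ofReal = Mc ^ k := by
    intro k
    rw [hMc]
    show (M ^ k).map Complex.ofRealHom = (M.map Complex.ofRealHom) ^ k
    rw [← RingHom.mapMatrix_apply, ← RingHom.mapMatrix_apply, map_pow]
  have hsr : spectralRadius ℂ Mc < 1 := by
    rcases (spectrum ℂ Mc).eq_empty_or_nonempty with h | h
    · rw [spectralRadius]
      simp [h]
    · have := spectrum.spectralRadius_lt_of_forall_lt_of_nonempty h (r := 1)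
        (fun k hk => by
          have := hspec k hk
          have h' : ‖k‖₊ < 1 := by rw [← NNReal.coe_lt_coe]; simpa using this
          exact_mod_cast h')
      simpa using this
  obtain ⟨r', hr'1, hr'2⟩ := exists_between hsr
  have hr'top : r' ≠ ⊤ := (hr'2.trans_le le_top).ne
  have hr'pos : 0 < r' := lt_of_le_of_lt zero_le hr'1
  set r : ℝ := r'.toReal with hr
  have hrpos : 0 < r := ENNReal.toReal_pos hr'pos.ne' hr'top
  have hrlt : r < 1 := by
    rw [hr, ← ENNReal.toReal_one]
    exact ENNReal.toReal_strict_mono (by simp) hr'2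
  have hGel := spectrum.pow_nnnorm_pow_one_div_tendsto_nhds_spectralRadius Mc
  have hev : ∀ᶠ k : ℕ in atTop, ((‖Mc ^ k‖₊ : ℝ≥0∞) ^ (1 / (k:ℝ))) < r' :=
    hGel.eventually_lt_const hr'1
  obtain ⟨K, hK⟩ := hev.exists_forall_of_atTop
  have hpow : ∀ k : ℕ, K ≤ k → 1 ≤ k → ‖Mc ^ k‖ ≤ r ^ k := by
    intro k hk hk1
    have hk0 : (k : ℝ) ≠ 0 := Nat.cast_ne_zero.mpr (by omega)
    have h1 : (((‖Mc ^ k‖₊ : ℝ≥0∞) ^ (1 / (k:ℝ))) ^ (k:ℝ)) ≤ r' ^ (k:ℝ) :=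
      ENNReal.rpow_le_rpow (hK k hk).le (by positivity)
    rw [← ENNReal.rpow_mul, one_div, inv_mul_cancel₀ hk0, ENNReal.rpow_one] at h1
    have h2 : (‖Mc ^ k‖₊ : ℝ≥0∞) ≤ r' ^ (k : ℕ) := by
      rwa [← ENNReal.rpow_natCast r' k]
    have h3 := ENNReal.toReal_mono (by simp [ENNReal.pow_ne_top hr'top]) h2
    simpa [ENNReal.toReal_pow] using h3
  set c : ℝ := 1 + ∑ k ∈ Finset.range (K + 1), ‖Mc ^ k‖ / r ^ k with hc
  have hsum_nonneg : 0 ≤ ∑ k ∈ Finset.range (K + 1), ‖Mc ^ k‖ / r ^ k :=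
    Finset.sum_nonneg fun k _ => div_nonneg (norm_nonneg _) (by positivity)
  have hcpos : 0 < c := by rw [hc]; linarith
  have hc1 : 1 ≤ c := by rw [hc]; linarith
  refine ⟨c, r, hcpos, hrpos, hrlt, fun k x => ?_⟩
  have hMck : ‖Mc ^ k‖ ≤ c * r ^ k := by
    rcases le_or_gt k K with hkK | hkK
    · have hmem : k ∈ Finset.range (K + 1) := Finset.mem_range.mpr (by omega)
      have : ‖Mc ^ k‖ / r ^ k ≤ ∑ j ∈ Finset.range (K + 1), ‖Mc ^ j‖ / r ^ j :=
        Finset.single_le_sum (f := fun j => ‖Mc ^ j‖ / r ^ j)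
          (fun j _ => div_nonneg (norm_nonneg _) (by positivity)) hmem
      have h4 : ‖Mc ^ k‖ / r ^ k ≤ c := by rw [hc]; linarith
      calc ‖Mc ^ k‖ = (‖Mc ^ k‖ / r ^ k) * r ^ k := by field_simp
        _ ≤ c * r ^ k := by
            apply mul_le_mul_of_nonneg_right h4 (by positivity)
    · calc ‖Mc ^ k‖ ≤ r ^ k := hpow k (by omega) (by omega)
        _ ≤ c * r ^ k := by nlinarith [pow_pos hrpos k]
  calc ‖(M ^ k).mulVec x‖ ≤ ‖(M ^ k).map Complex.ofReal‖ * ‖x‖ :=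
        mulVec_norm_le_complex _ _
    _ = ‖Mc ^ k‖ * ‖x‖ := by rw [hmap]
    _ ≤ (c * r ^ k) * ‖x‖ := mul_le_mul_of_nonneg_right hMck (norm_nonneg _)
    _ = c * r ^ k * ‖x‖ := by ring

theorem good_norm {p : ℕ} (M : Matrix (Fin p) (Fin p) ℝ) (c r : ℝ) (_hc : 0 < c) (hr0 : 0 < r)
    (hb : ∀ (k : ℕ) (x : Fin p → ℝ), ‖(M ^ k).mulVec x‖ ≤ c * r ^ k * ‖x‖) :
    ∃ N : (Fin p → ℝ) → ℝ,
      (∀ x, ‖x‖ ≤ N x) ∧ (∀ x, N x ≤ c * ‖x‖) ∧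
      (∀ x y, N (x + y) ≤ N x + N y) ∧
      (∀ x, N (M.mulVec x) ≤ r * N x) := by
  set N : (Fin p → ℝ) → ℝ := fun x => ⨆ k : ℕ, ‖(M ^ k).mulVec x‖ / r ^ k with hN
  have hbdd : ∀ x, BddAbove (Set.range fun k : ℕ => ‖(M ^ k).mulVec x‖ / r ^ k) := by
    intro x
    refine ⟨c * ‖x‖, forall_mem_range.2 fun k => ?_⟩
    rw [div_le_iff₀ (by positivity)]
    calc ‖(M ^ k).mulVec x‖ ≤ c * r ^ k * ‖x‖ := hb k x
      _ = c * ‖x‖ * r ^ k := by ring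
  have hle : ∀ x (k : ℕ), ‖(M ^ k).mulVec x‖ / r ^ k ≤ N x := fun x k =>
    le_ciSup (hbdd x) k
  refine ⟨N, ?_, ?_, ?_, ?_⟩
  · intro x
    have := hle x 0
    simpa using this
  · intro x
    refine ciSup_le fun k => ?_
    rw [div_le_iff₀ (by positivity)]
    calc ‖(M ^ k).mulVec x‖ ≤ c * r ^ k * ‖x‖ := hb k x
      _ = c * ‖x‖ * r ^ k := by ring
  · intro x y
    refine ciSup_le fun k => ?_
    have h1 : ‖(M ^ k).mulVec (x + y)‖ / r ^ k ≤
        ‖(M ^ k).mulVec x‖ / r ^ k + ‖(M ^ k).mulVec y‖ / r ^ k := by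
      rw [← add_div]
      apply div_le_div_of_nonneg_right ?_ (by positivity)
      rw [Matrix.mulVec_add]
      exact norm_add_le _ _
    calc ‖(M ^ k).mulVec (x + y)‖ / r ^ k ≤ _ := h1
      _ ≤ N x + N y := add_le_add (hle x k) (hle y k)
  · intro x
    refine ciSup_le fun k => ?_
    have h1 : (M ^ k).mulVec (M.mulVec x) = (M ^ (k+1)).mulVec x := by
      rw [Matrix.mulVec_mulVec, ← pow_succ]
    rw [h1]
    have : ‖(M ^ (k+1)).mulVec x‖ / r ^ k = r * (‖(M ^ (k+1)).mulVec x‖ / r ^ (k+1)) := by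
      field_simp
      ring
    rw [this]
    exact mul_le_mul_of_nonneg_left (hle x (k+1)) hr0.le

theorem exp_split {n : ℕ} (A : Matrix (Fin n) (Fin n) ℝ) (t τ : ℝ) :
    NormedSpace.exp ((t - τ) • A) =
      NormedSpace.exp (t • A) * NormedSpace.exp ((-τ) • A) := by
  rw [sub_smul, sub_eq_add_neg, ← neg_smul]
  exact Matrix.exp_add_of_commute _ _ (((Commute.refl A).smul_left t).smul_right (-τ))

theorem exp_cont {n : ℕ} (A : Matrix (Fin n) (Fin n) ℝ) :
    Continuous fun s : ℝ => NormedSpace.exp (s • A) := by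
  letI := Matrix.linftyOpNormedAddCommGroup (m := Fin n) (n := Fin n) (α := ℝ)
  letI := Matrix.linftyOpNormedRing (n := Fin n) (α := ℝ)
  letI := Matrix.linftyOpNormedAlgebra (n := Fin n) (R := ℝ) (α := ℝ)
  letI := Matrix.linftyOpNormedAlgebra (n := Fin n) (R := ℚ) (α := ℝ)
  exact NormedSpace.exp_continuous.comp (continuous_id.smul continuous_const)

theorem cont_mulVec {a b : ℕ} :
    Continuous fun z : (Matrix (Fin a) (Fin b) ℝ) × (Fin b → ℝ) => z.1.mulVec z.2 :=
  Continuous.matrix_mulVec continuous_fst continuous_snd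

theorem mulVec_continuous {a b : ℕ} (P : Matrix (Fin a) (Fin b) ℝ) :
    Continuous fun y : Fin b → ℝ => P.mulVec y :=
  Continuous.matrix_mulVec continuous_const continuous_id

theorem exists_mulVec_bound {a b : ℕ} (P : Matrix (Fin a) (Fin b) ℝ) :
    ∃ cP : ℝ, 0 < cP ∧ ∀ z, ‖P.mulVec z‖ ≤ cP * ‖z‖ := by
  letI := Matrix.linftyOpNormedAddCommGroup (m := Fin a) (n := Fin b) (α := ℝ)
  refine ⟨‖P‖ + 1, by positivity, fun z => ?_⟩
  calc ‖P.mulVec z‖ ≤ ‖P‖ * ‖z‖ := Matrix.linfty_opNorm_mulVec _ _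
    _ ≤ (‖P‖ + 1) * ‖z‖ := by nlinarith [norm_nonneg z, norm_nonneg P]

set_option maxHeartbeats 1000000 in
theorem cont_integral {n q' : ℕ} (A : Matrix (Fin n) (Fin n) ℝ) {T : ℝ} (hT : 0 ≤ T)
    (D : Matrix (Fin q') (Fin n) ℝ) (f : ℝ → Fin n → ℝ) (hf : ContinuousOn f (Icc 0 T)) :
    ContinuousOn
      (fun t => ∫ τ in (0:ℝ)..t, D.mulVec ((NormedSpace.exp ((t - τ) • A)).mulVec (f τ)))
      (Icc 0 T) := by
  set g : ℝ → Fin n → ℝ := fun τ => (NormedSpace.exp ((-τ) • A)).mulVec (f τ) with hg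
  have hKmv : Continuous fun z : (Matrix (Fin n) (Fin n) ℝ) × (Fin n → ℝ) => z.1.mulVec z.2 :=
    Continuous.matrix_mulVec continuous_fst continuous_snd
  have hgc : ContinuousOn g (Icc 0 T) :=
    hKmv.comp_continuousOn ((((exp_cont A).comp continuous_neg).continuousOn).prodMk hf)
  have hgint : IntegrableOn g (uIcc 0 T) volume := by
    rw [uIcc_of_le hT]
    exact hgc.integrableOn_compact isCompact_Icc
  have hF : ContinuousOn (fun t => ∫ τ in (0:ℝ)..t, g τ) (Icc 0 T) := by
    have := continuousOn_primitive_interval (a := (0:ℝ)) (b := T) (f := g) (μ := volume) hgint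
    rwa [uIcc_of_le hT] at this
  have heq : ∀ t ∈ Icc (0:ℝ) T,
      (∫ τ in (0:ℝ)..t, D.mulVec ((NormedSpace.exp ((t - τ) • A)).mulVec (f τ)))
        = (D * NormedSpace.exp (t • A)).mulVec (∫ τ in (0:ℝ)..t, g τ) := by
    intro t ht
    have hEq1 : ∀ τ : ℝ, D.mulVec ((NormedSpace.exp ((t - τ) • A)).mulVec (f τ))
        = (D * NormedSpace.exp (t • A)).mulVec (g τ) := by
      intro τ
      rw [exp_split, hg]
      simp only [Matrix.mulVec_mulVec, Matrix.mul_assoc]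
    simp_rw [hEq1]
    set L : (Fin n → ℝ) →L[ℝ] (Fin q' → ℝ) :=
      LinearMap.toContinuousLinearMap ((D * NormedSpace.exp (t • A)).mulVecLin) with hL
    have hgi : IntervalIntegrable g volume 0 t := by
      apply ContinuousOn.intervalIntegrable
      apply hgc.mono
      rw [uIcc_of_le ht.1]
      exact Icc_subset_Icc le_rfl ht.2
    have := L.intervalIntegral_comp_comm hgi (a := 0) (b := t)
    simpa [hL, Matrix.mulVecLin_apply] using this
  apply ContinuousOn.congr ?_ heq
  have hK : Continuous fun z : (Matrix (Fin q') (Fin n) ℝ) × (Fin n → ℝ) => z.1.mulVec z.2 :=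
    Continuous.matrix_mulVec continuous_fst continuous_snd
  have hH : Continuous fun t : ℝ => D * NormedSpace.exp (t • A) :=
    Continuous.matrix_mul continuous_const (exp_cont A)
  exact hK.comp_continuousOn (hH.continuousOn.prodMk hF)

set_option maxHeartbeats 1000000 in
theorem integrand_intervalIntegrable {n q' : ℕ} (A : Matrix (Fin n) (Fin n) ℝ) {T : ℝ}
    (D : Matrix (Fin q') (Fin n) ℝ) (g : ℝ → Fin n → ℝ) (hg : ContinuousOn g (Icc 0 T))
    {t : ℝ} (ht : t ∈ Icc (0:ℝ) T) :
    IntervalIntegrable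
      (fun τ => D.mulVec ((NormedSpace.exp ((t - τ) • A)).mulVec (g τ))) volume 0 t := by
  apply ContinuousOn.intervalIntegrable
  rw [uIcc_of_le ht.1]
  have h1 : Continuous fun τ : ℝ => NormedSpace.exp ((t - τ) • A) :=
    (exp_cont A).comp (continuous_const.sub continuous_id)
  have h2 : ContinuousOn (fun τ => (D * NormedSpace.exp ((t - τ) • A)).mulVec (g τ))
      (Icc 0 t) :=
    cont_mulVec.comp_continuousOn
      (((continuous_const.matrix_mul h1).continuousOn).prodMk
        (hg.mono (Icc_subset_Icc le_rfl ht.2)))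
  have h3 : (fun τ => D.mulVec ((NormedSpace.exp ((t - τ) • A)).mulVec (g τ)))
      = fun τ => (D * NormedSpace.exp ((t - τ) • A)).mulVec (g τ) := by
    funext τ
    rw [Matrix.mulVec_mulVec]
  rw [h3]
  exact h2

set_option maxHeartbeats 1000000 in
theorem integral_bound {n q' : ℕ} (A : Matrix (Fin n) (Fin n) ℝ) {T : ℝ} (hT : 0 ≤ T)
    (D : Matrix (Fin q') (Fin n) ℝ) :
    ∃ κ : ℝ, 0 < κ ∧ ∀ (f : ℝ → Fin n → ℝ), ContinuousOn f (Icc 0 T) →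
      ∀ (φ : ℝ → ℝ), ContinuousOn φ (Icc 0 T) →
      ∀ t ∈ Icc (0:ℝ) T, (∀ τ ∈ Icc (0:ℝ) t, ‖f τ‖ ≤ φ τ) →
      ‖∫ τ in (0:ℝ)..t, D.mulVec ((NormedSpace.exp ((t - τ) • A)).mulVec (f τ))‖
        ≤ κ * ∫ τ in (0:ℝ)..t, φ τ := by
  letI := Matrix.linftyOpNormedAddCommGroup (m := Fin q') (n := Fin n) (α := ℝ)
  have hcontD : ContinuousOn (fun s : ℝ => D * NormedSpace.exp (s • A)) (Icc 0 T) :=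
    (Continuous.matrix_mul continuous_const (exp_cont A)).continuousOn
  obtain ⟨κ₀, hκ₀⟩ := isCompact_Icc.exists_bound_of_continuousOn hcontD
  refine ⟨max κ₀ 1, lt_of_lt_of_le one_pos (le_max_right _ _), ?_⟩
  intro f hf φ hφ t ht hfφ
  have ht0 : (0:ℝ) ≤ t := ht.1
  have hsub : Icc (0:ℝ) t ⊆ Icc 0 T := Icc_subset_Icc le_rfl ht.2
  have hκnn : (0:ℝ) ≤ max κ₀ 1 := le_trans zero_le_one (le_max_right _ _)
  have hφnn : ∀ τ ∈ Icc (0:ℝ) t, 0 ≤ φ τ := fun τ hτ =>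
    le_trans (norm_nonneg _) (hfφ τ hτ)
  have key : ∀ τ ∈ Icc (0:ℝ) t,
      ‖D.mulVec ((NormedSpace.exp ((t - τ) • A)).mulVec (f τ))‖ ≤ max κ₀ 1 * φ τ := by
    intro τ hτ
    have hs : t - τ ∈ Icc (0:ℝ) T := ⟨by linarith [hτ.2], by linarith [hτ.1, ht.2]⟩
    rw [Matrix.mulVec_mulVec]
    calc ‖(D * NormedSpace.exp ((t - τ) • A)).mulVec (f τ)‖
        ≤ ‖D * NormedSpace.exp ((t - τ) • A)‖ * ‖f τ‖ :=
          Matrix.linfty_opNorm_mulVec _ _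
      _ ≤ max κ₀ 1 * φ τ :=
          mul_le_mul (le_trans (hκ₀ _ hs) (le_max_left _ _)) (hfφ τ hτ)
            (norm_nonneg _) hκnn
  have hφint : IntervalIntegrable (fun τ => max κ₀ 1 * φ τ) volume 0 t := by
    apply ContinuousOn.intervalIntegrable
    rw [uIcc_of_le ht0]
    exact continuousOn_const.mul (hφ.mono hsub)
  have h1 : ‖∫ τ in (0:ℝ)..t, D.mulVec ((NormedSpace.exp ((t - τ) • A)).mulVec (f τ))‖
      ≤ |∫ τ in (0:ℝ)..t, max κ₀ 1 * φ τ| := by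
    refine le_trans (intervalIntegral.norm_integral_le_of_norm_le ht0 ?_ hφint) (le_abs_self _)
    filter_upwards with τ hτ
    exact key τ (Ioc_subset_Icc_self hτ)
  have h2 : (∫ τ in (0:ℝ)..t, max κ₀ 1 * φ τ) = max κ₀ 1 * ∫ τ in (0:ℝ)..t, φ τ :=
    intervalIntegral.integral_const_mul _ _
  have h3 : 0 ≤ ∫ τ in (0:ℝ)..t, φ τ :=
    intervalIntegral.integral_nonneg ht0 fun τ hτ => hφnn τ hτ
  rw [h2] at h1
  rwa [abs_of_nonneg (by positivity)] at h1

theorem shift_mulVec {n q : ℕ} (C : Matrix (Fin q) (Fin n) ℝ) (A E : Matrix (Fin n) (Fin n) ℝ)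
    (y : Fin n → ℝ) : C.mulVec ((A * E).mulVec y) = (C * A).mulVec (E.mulVec y) := by
  rw [Matrix.mulVec_mulVec, Matrix.mulVec_mulVec, Matrix.mul_assoc]

theorem diff_mulVec {a n p : ℕ} (D : Matrix (Fin a) (Fin n) ℝ) (E : Matrix (Fin n) (Fin n) ℝ)
    (B : Matrix (Fin n) (Fin p) ℝ) (x y : Fin p → ℝ) (w' : Fin n → ℝ) :
    D.mulVec (E.mulVec (B.mulVec x + w')) - D.mulVec (E.mulVec (B.mulVec y + w'))
      = D.mulVec (E.mulVec (B.mulVec (x - y))) := by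
  have h : (B.mulVec x + w') - (B.mulVec y + w') = B.mulVec (x - y) := by
    rw [Matrix.mulVec_sub]
    abel
  rw [← Matrix.mulVec_sub, ← Matrix.mulVec_sub, h]

theorem exp_mul_integral {lam : ℝ} (hlam : lam ≠ 0) (t : ℝ) :
    (∫ τ in (0:ℝ)..t, Real.exp (lam * τ)) = (Real.exp (lam * t) - 1) / lam := by
  rw [intervalIntegral.integral_comp_mul_left Real.exp hlam, integral_exp]
  simp [smul_eq_mul]
  field_simp

end ILCAux

set_option maxHeartbeats 4000000 in
/-- **convergence of D-type ILC, input side.** If every complex eigenvalue of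
`I_p − Υ·C·B` has modulus `< 1`, then the D-type ILC input sequence
`u_{k+1} = u_k + Υ·(y_d′ − z(u_k))` converges uniformly on `[0,T]` to some continuous `u_∞`,
and the outputs `y(u_k)` converge uniformly on `[0,T]` to `y(u_∞)`. -/
theorem dtype_ilc_input_convergence
    (T : ℝ) (hT : 0 < T) (n p q : ℕ)
    (A : Matrix (Fin n) (Fin n) ℝ) (B : Matrix (Fin n) (Fin p) ℝ)
    (C : Matrix (Fin q) (Fin n) ℝ) (x₀ : Fin n → ℝ)
    (w : ℝ → Fin n → ℝ) (hw : ContinuousOn w (Icc 0 T))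
    (Y : (ℝ → Fin p → ℝ) → ℝ → Fin q → ℝ)
    (hY : ∀ (v : ℝ → Fin p → ℝ) (t : ℝ),
      Y v t = C.mulVec ((NormedSpace.exp (t • A)).mulVec x₀) +
        ∫ τ in (0:ℝ)..t,
          C.mulVec ((NormedSpace.exp ((t - τ) • A)).mulVec (B.mulVec (v τ) + w τ)))
    (Z : (ℝ → Fin p → ℝ) → ℝ → Fin q → ℝ)
    (hZ : ∀ (v : ℝ → Fin p → ℝ) (t : ℝ),
      Z v t = C.mulVec ((A * NormedSpace.exp (t • A)).mulVec x₀) +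
        C.mulVec (B.mulVec (v t) + w t) +
        ∫ τ in (0:ℝ)..t,
          C.mulVec ((A * NormedSpace.exp ((t - τ) • A)).mulVec (B.mulVec (v τ) + w τ)))
    (Υ : Matrix (Fin p) (Fin q) ℝ)
    (yd yd' : ℝ → Fin q → ℝ)
    (hyd : ∀ t ∈ Icc (0:ℝ) T, HasDerivWithinAt yd (yd' t) (Icc 0 T) t)
    (hyd' : ContinuousOn yd' (Icc 0 T))
    (u : ℕ → ℝ → Fin p → ℝ) (hu0 : ContinuousOn (u 0) (Icc 0 T))
    (hrec : ∀ (k : ℕ) (t : ℝ), u (k + 1) t = u k t + Υ.mulVec (yd' t - Z (u k) t))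
    (hspec : ∀ μ ∈ spectrum ℂ
        (((1 : Matrix (Fin p) (Fin p) ℝ) - Υ * C * B).map Complex.ofReal),
      ‖μ‖ < 1) :
    ∃ uinf : ℝ → Fin p → ℝ, ContinuousOn uinf (Icc 0 T) ∧
      TendstoUniformlyOn u uinf atTop (Icc 0 T) ∧
      TendstoUniformlyOn (fun k => Y (u k)) (Y uinf) atTop (Icc 0 T) := by
  have hT' : (0:ℝ) ≤ T := hT.le
  set M : Matrix (Fin p) (Fin p) ℝ := (1 : Matrix (Fin p) (Fin p) ℝ) - Υ * C * B with hM
  obtain ⟨c, r, hc, hr0, hr1, hgeo⟩ := ILCAux.geom_bound M hspec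
  obtain ⟨N, hN1, hN2, hN3, hN4⟩ := ILCAux.good_norm M c r hc hr0 hgeo
  obtain ⟨cB, hcB0, hBv⟩ := ILCAux.exists_mulVec_bound B
  obtain ⟨cΥ, hcΥ0, hΥv⟩ := ILCAux.exists_mulVec_bound Υ
  obtain ⟨κ, hκ0, hκ⟩ := ILCAux.integral_bound A hT' (C * A)
  obtain ⟨κY, hκY0, hκY⟩ := ILCAux.integral_bound A hT' C
  have hNnn : ∀ x, 0 ≤ N x := fun x => le_trans (norm_nonneg _) (hN1 _)
  -- continuity of Z v
  have hshift : ∀ (E : Matrix (Fin n) (Fin n) ℝ) (y : Fin n → ℝ),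
      C.mulVec ((A * E).mulVec y) = (C * A).mulVec (E.mulVec y) :=
    fun E y => ILCAux.shift_mulVec C A E y
  have hinner : ∀ (v : ℝ → Fin p → ℝ), ContinuousOn v (Icc 0 T) →
      ContinuousOn (fun t => B.mulVec (v t) + w t) (Icc 0 T) := fun v hv =>
    ((ILCAux.mulVec_continuous B).comp_continuousOn hv).add hw
  have hZcont : ∀ v, ContinuousOn v (Icc 0 T) → ContinuousOn (Z v) (Icc 0 T) := by
    intro v hv
    have h1 : Continuous fun t : ℝ =>
        C.mulVec ((A * NormedSpace.exp (t • A)).mulVec x₀) :=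
      Continuous.matrix_mulVec continuous_const
        (Continuous.matrix_mulVec (continuous_const.matrix_mul (ILCAux.exp_cont A))
          continuous_const)
    have h2 : ContinuousOn (fun t => C.mulVec (B.mulVec (v t) + w t)) (Icc 0 T) :=
      (ILCAux.mulVec_continuous C).comp_continuousOn (hinner v hv)
    have h3 := ILCAux.cont_integral A hT' (C * A) _ (hinner v hv)
    have h4 : ContinuousOn (fun t =>
        C.mulVec ((A * NormedSpace.exp (t • A)).mulVec x₀) +
        C.mulVec (B.mulVec (v t) + w t) +
        ∫ τ in (0:ℝ)..t,
          (C * A).mulVec ((NormedSpace.exp ((t - τ) • A)).mulVec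
            (B.mulVec (v τ) + w τ))) (Icc 0 T) :=
      (h1.continuousOn.add h2).add h3
    apply h4.congr
    intro t _
    rw [hZ]
    simp only [hshift]
  have hucont : ∀ k, ContinuousOn (u k) (Icc 0 T) := by
    intro k
    induction k with
    | zero => exact hu0
    | succ k ih =>
      have hcont : ContinuousOn (fun t => u k t + Υ.mulVec (yd' t - Z (u k) t)) (Icc 0 T) :=
        ih.add ((ILCAux.mulVec_continuous Υ).comp_continuousOn (hyd'.sub (hZcont _ ih)))
      exact hcont.congr fun t _ => hrec k t
  set d : ℕ → ℝ → Fin p → ℝ := fun k t => u (k+1) t - u k t with hd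
  have hdcont : ∀ k, ContinuousOn (d k) (Icc 0 T) := fun k => (hucont (k+1)).sub (hucont k)
  -- the difference recursion
  have hdrec : ∀ (k : ℕ), ∀ t ∈ Icc (0:ℝ) T,
      d (k+1) t = M.mulVec (d k t) - Υ.mulVec (∫ τ in (0:ℝ)..t,
        (C * A).mulVec ((NormedSpace.exp ((t - τ) • A)).mulVec (B.mulVec (d k τ)))) := by
    intro k t ht
    have hints : ∀ j : ℕ, IntervalIntegrable (fun τ =>
        (C * A).mulVec ((NormedSpace.exp ((t - τ) • A)).mulVec (B.mulVec (u j τ) + w τ)))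
        volume 0 t :=
      fun j => ILCAux.integrand_intervalIntegrable A (C * A) _ (hinner (u j) (hucont j)) ht
    have hZform : ∀ j : ℕ, Z (u j) t =
        (C * A).mulVec ((NormedSpace.exp (t • A)).mulVec x₀) +
        C.mulVec (B.mulVec (u j t) + w t) +
        ∫ τ in (0:ℝ)..t,
          (C * A).mulVec ((NormedSpace.exp ((t - τ) • A)).mulVec
            (B.mulVec (u j τ) + w τ)) := by
      intro j
      rw [hZ]
      simp only [hshift]
    have hZd : Z (u (k+1)) t - Z (u k) t = C.mulVec (B.mulVec (d k t)) +
        ∫ τ in (0:ℝ)..t,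
          (C * A).mulVec ((NormedSpace.exp ((t - τ) • A)).mulVec (B.mulVec (d k τ))) := by
      rw [hZform (k+1), hZform k]
      have h3 : (∫ τ in (0:ℝ)..t,
            (C * A).mulVec ((NormedSpace.exp ((t - τ) • A)).mulVec
              (B.mulVec (u (k+1) τ) + w τ)))
          - (∫ τ in (0:ℝ)..t,
            (C * A).mulVec ((NormedSpace.exp ((t - τ) • A)).mulVec
              (B.mulVec (u k τ) + w τ)))
          = ∫ τ in (0:ℝ)..t,
            (C * A).mulVec ((NormedSpace.exp ((t - τ) • A)).mulVec (B.mulVec (d k τ))) := by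
        rw [← intervalIntegral.integral_sub (hints (k+1)) (hints k)]
        apply intervalIntegral.integral_congr
        intro τ _
        exact ILCAux.diff_mulVec _ _ _ _ _ _
      have h4 : C.mulVec (B.mulVec (u (k+1) t) + w t) - C.mulVec (B.mulVec (u k t) + w t)
          = C.mulVec (B.mulVec (d k t)) := by
        have h5 : (B.mulVec (u (k+1) t) + w t) - (B.mulVec (u k t) + w t)
            = B.mulVec (d k t) := by
          rw [hd]
          simp only []
          rw [Matrix.mulVec_sub]
          abel
        rw [← Matrix.mulVec_sub, h5]
      calc ((C * A).mulVec ((NormedSpace.exp (t • A)).mulVec x₀) +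
              C.mulVec (B.mulVec (u (k+1) t) + w t) + _)
            - ((C * A).mulVec ((NormedSpace.exp (t • A)).mulVec x₀) +
              C.mulVec (B.mulVec (u k t) + w t) + _)
          = (C.mulVec (B.mulVec (u (k+1) t) + w t) - C.mulVec (B.mulVec (u k t) + w t)) +
            ((∫ τ in (0:ℝ)..t,
              (C * A).mulVec ((NormedSpace.exp ((t - τ) • A)).mulVec
                (B.mulVec (u (k+1) τ) + w τ)))
            - (∫ τ in (0:ℝ)..t,
              (C * A).mulVec ((NormedSpace.exp ((t - τ) • A)).mulVec
                (B.mulVec (u k τ) + w τ)))) := by abel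
        _ = C.mulVec (B.mulVec (d k t)) + ∫ τ in (0:ℝ)..t,
              (C * A).mulVec ((NormedSpace.exp ((t - τ) • A)).mulVec (B.mulVec (d k τ))) := by
            rw [h3, h4]
    have h5 : d (k+1) t = d k t - Υ.mulVec (Z (u (k+1)) t - Z (u k) t) := by
      have h6 : Υ.mulVec (Z (u (k+1)) t - Z (u k) t)
          = Υ.mulVec (yd' t - Z (u k) t) - Υ.mulVec (yd' t - Z (u (k+1)) t) := by
        rw [← Matrix.mulVec_sub]
        congr 1
        abel
      rw [hd]
      simp only []
      rw [hrec (k+1) t, hrec k t, h6]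
      abel
    have h6 : M.mulVec (d k t) = d k t - Υ.mulVec (C.mulVec (B.mulVec (d k t))) := by
      rw [hM, Matrix.sub_mulVec, Matrix.one_mulVec, Matrix.mulVec_mulVec, Matrix.mulVec_mulVec]
    rw [h5, hZd, Matrix.mulVec_add, h6]
    abel
  -- constants for the weighted norm estimate
  set Cst : ℝ := c * cΥ * κ * cB with hCst
  have hCst0 : 0 < Cst := by positivity
  set lam : ℝ := 2 * Cst / (1 - r) with hlam
  have hlam0 : 0 < lam := by
    rw [hlam]
    have : 0 < 1 - r := by linarith
    positivity
  have hCstlam : Cst / lam = (1 - r) / 2 := by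
    rw [hlam]
    field_simp
  set ρ : ℝ := (1 + r) / 2 with hρ
  have hρ0 : 0 ≤ ρ := by rw [hρ]; linarith
  have hρ1 : ρ < 1 := by rw [hρ]; linarith
  -- weighted sup
  set S : ℕ → ℝ := fun k =>
    sSup ((fun t => Real.exp (-(lam * t)) * N (d k t)) '' Icc 0 T) with hS
  have hbddS : ∀ k, BddAbove ((fun t => Real.exp (-(lam * t)) * N (d k t)) '' Icc 0 T) := by
    intro k
    obtain ⟨Dk, hDk⟩ := isCompact_Icc.exists_bound_of_continuousOn (hdcont k)
    refine ⟨c * max Dk 0, ?_⟩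
    rintro x ⟨t, ht, rfl⟩
    have h1 : N (d k t) ≤ c * max Dk 0 :=
      le_trans (hN2 _)
        (mul_le_mul_of_nonneg_left (le_trans (hDk t ht) (le_max_left _ _)) hc.le)
    have h2 : Real.exp (-(lam * t)) ≤ 1 := by
      rw [← Real.exp_zero]
      apply Real.exp_le_exp.mpr
      nlinarith [ht.1]
    have h3 : 0 ≤ N (d k t) := hNnn _
    calc Real.exp (-(lam * t)) * N (d k t) ≤ 1 * N (d k t) :=
          mul_le_mul_of_nonneg_right h2 h3
      _ = N (d k t) := one_mul _
      _ ≤ c * max Dk 0 := h1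
  have hmemS : ∀ k t, t ∈ Icc (0:ℝ) T → Real.exp (-(lam * t)) * N (d k t) ≤ S k :=
    fun k t ht => le_csSup (hbddS k) ⟨t, ht, rfl⟩
  have hS0 : ∀ k, 0 ≤ S k := by
    intro k
    have h0T : (0:ℝ) ∈ Icc (0:ℝ) T := ⟨le_rfl, hT'⟩
    exact le_trans (mul_nonneg (Real.exp_pos _).le (hNnn _)) (hmemS k 0 h0T)
  have hNle : ∀ k t, t ∈ Icc (0:ℝ) T → N (d k t) ≤ Real.exp (lam * t) * S k := by
    intro k t ht
    have h1 := hmemS k t ht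
    have hexp : Real.exp (-(lam * t)) * Real.exp (lam * t) = 1 := by
      rw [← Real.exp_add]
      simp
    have h2 := mul_le_mul_of_nonneg_right h1 (Real.exp_pos (lam * t)).le
    calc N (d k t) = Real.exp (-(lam * t)) * N (d k t) * Real.exp (lam * t) := by
          rw [mul_comm (Real.exp (-(lam * t))) (N (d k t)), mul_assoc, hexp, mul_one]
      _ ≤ S k * Real.exp (lam * t) := h2
      _ = Real.exp (lam * t) * S k := mul_comm _ _
  have hdle : ∀ k t, t ∈ Icc (0:ℝ) T → ‖d k t‖ ≤ Real.exp (lam * t) * S k :=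
    fun k t ht => le_trans (hN1 _) (hNle k t ht)
  -- contraction
  have hScon : ∀ k, S (k+1) ≤ ρ * S k := by
    intro k
    apply Real.sSup_le ?_ (mul_nonneg hρ0 (hS0 k))
    rintro x ⟨t, ht, rfl⟩
    have hfB : ContinuousOn (fun τ => B.mulVec (d k τ)) (Icc 0 T) :=
      (ILCAux.mulVec_continuous B).comp_continuousOn (hdcont k)
    have hφc : ContinuousOn (fun τ => cB * (Real.exp (lam * τ) * S k)) (Icc 0 T) :=
      (continuous_const.mul
        ((Real.continuous_exp.comp (continuous_const.mul continuous_id)).mul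
          continuous_const)).continuousOn
    have hkey : ∀ τ ∈ Icc (0:ℝ) t, ‖B.mulVec (d k τ)‖ ≤ cB * (Real.exp (lam * τ) * S k) :=
      fun τ hτ => le_trans (hBv _)
        (mul_le_mul_of_nonneg_left (hdle k τ ⟨hτ.1, le_trans hτ.2 ht.2⟩) hcB0.le)
    have hJ := hκ _ hfB _ hφc t ht hkey
    have hIφ : (∫ τ in (0:ℝ)..t, cB * (Real.exp (lam * τ) * S k))
        = cB * S k * ((Real.exp (lam * t) - 1) / lam) := by
      have hfun : (fun τ => cB * (Real.exp (lam * τ) * S k))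
          = fun τ => (cB * S k) * Real.exp (lam * τ) := by
        funext τ
        ring
      rw [hfun, intervalIntegral.integral_const_mul, ILCAux.exp_mul_integral hlam0.ne']
    rw [hIφ] at hJ
    -- assemble the estimate
    have hdr := hdrec k t ht
    set J : Fin q → ℝ := ∫ τ in (0:ℝ)..t,
      (C * A).mulVec ((NormedSpace.exp ((t - τ) • A)).mulVec (B.mulVec (d k τ))) with hJdef
    have hstep1 : N (d (k+1) t) ≤ N (M.mulVec (d k t)) + N (-(Υ.mulVec J)) := by
      rw [hdr, sub_eq_add_neg]
      exact hN3 _ _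
    have hstep2 : N (M.mulVec (d k t)) ≤ r * (Real.exp (lam * t) * S k) :=
      le_trans (hN4 _) (mul_le_mul_of_nonneg_left (hNle k t ht) hr0.le)
    have hstep3 : N (-(Υ.mulVec J)) ≤ c * (cΥ * (κ * (cB * S k * ((Real.exp (lam * t) - 1) / lam)))) := by
      calc N (-(Υ.mulVec J)) ≤ c * ‖-(Υ.mulVec J)‖ := hN2 _
        _ = c * ‖Υ.mulVec J‖ := by rw [norm_neg]
        _ ≤ c * (cΥ * ‖J‖) := mul_le_mul_of_nonneg_left (hΥv _) hc.le
        _ ≤ c * (cΥ * (κ * (cB * S k * ((Real.exp (lam * t) - 1) / lam)))) := by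
            apply mul_le_mul_of_nonneg_left ?_ hc.le
            apply mul_le_mul_of_nonneg_left ?_ hcΥ0.le
            calc ‖J‖ ≤ κ * (cB * S k * ((Real.exp (lam * t) - 1) / lam)) := hJ
              _ = κ * (cB * S k * ((Real.exp (lam * t) - 1) / lam)) := rfl
    have hexp1 : Real.exp (-(lam * t)) * Real.exp (lam * t) = 1 := by
      rw [← Real.exp_add]; simp
    have hXpos := Real.exp_pos (lam * t)
    have hYpos := Real.exp_pos (-(lam * t))
    have hCseq : c * (cΥ * (κ * cB)) = Cst := by rw [hCst]; ring
    have h7 : Real.exp (-(lam * t)) * ((Real.exp (lam * t) - 1) / lam) ≤ 1 / lam := by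
      rw [← mul_div_assoc, div_le_div_iff₀ hlam0 hlam0]
      nlinarith [hexp1, hYpos.le]
    have hq' : Cst * S k * (Real.exp (-(lam * t)) * ((Real.exp (lam * t) - 1) / lam))
        ≤ (1 - r) / 2 * S k := by
      calc Cst * S k * (Real.exp (-(lam * t)) * ((Real.exp (lam * t) - 1) / lam))
          ≤ Cst * S k * (1 / lam) :=
            mul_le_mul_of_nonneg_left h7 (mul_nonneg hCst0.le (hS0 k))
        _ = (Cst / lam) * S k := by ring
        _ = (1 - r) / 2 * S k := by rw [hCstlam]
    have heq2 : Real.exp (-(lam * t)) *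
        (r * (Real.exp (lam * t) * S k) +
          c * (cΥ * (κ * (cB * S k * ((Real.exp (lam * t) - 1) / lam)))))
        = r * S k * (Real.exp (-(lam * t)) * Real.exp (lam * t)) +
          Cst * S k * (Real.exp (-(lam * t)) * ((Real.exp (lam * t) - 1) / lam)) := by
      rw [← hCseq]
      ring
    calc Real.exp (-(lam * t)) * N (d (k+1) t)
        ≤ Real.exp (-(lam * t)) *
            (r * (Real.exp (lam * t) * S k) +
              c * (cΥ * (κ * (cB * S k * ((Real.exp (lam * t) - 1) / lam))))) := by
          apply mul_le_mul_of_nonneg_left ?_ hYpos.le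
          exact le_trans hstep1 (add_le_add hstep2 hstep3)
      _ = r * S k * (Real.exp (-(lam * t)) * Real.exp (lam * t)) +
          Cst * S k * (Real.exp (-(lam * t)) * ((Real.exp (lam * t) - 1) / lam)) := heq2
      _ = r * S k +
          Cst * S k * (Real.exp (-(lam * t)) * ((Real.exp (lam * t) - 1) / lam)) := by
          rw [hexp1, mul_one]
      _ ≤ r * S k + (1 - r) / 2 * S k := add_le_add le_rfl hq'
      _ = ρ * S k := by rw [hρ]; ring
  -- geometric decay of S
  have hSgeo : ∀ k, S k ≤ S 0 * ρ ^ k := by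
    intro k
    induction k with
    | zero => simp
    | succ k ih =>
      calc S (k+1) ≤ ρ * S k := hScon k
        _ ≤ ρ * (S 0 * ρ ^ k) := mul_le_mul_of_nonneg_left ih hρ0
        _ = S 0 * ρ ^ (k+1) := by ring
  set E0 : ℝ := Real.exp (lam * T) * S 0 with hE0
  have hE0nn : 0 ≤ E0 := mul_nonneg (Real.exp_pos _).le (hS0 0)
  have hdb : ∀ k t, t ∈ Icc (0:ℝ) T → ‖d k t‖ ≤ E0 * ρ ^ k := by
    intro k t ht
    have h1 : Real.exp (lam * t) ≤ Real.exp (lam * T) :=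
      Real.exp_le_exp.mpr (by nlinarith [ht.2, hlam0])
    calc ‖d k t‖ ≤ Real.exp (lam * t) * S k := hdle k t ht
      _ ≤ Real.exp (lam * T) * S k := mul_le_mul_of_nonneg_right h1 (hS0 k)
      _ ≤ Real.exp (lam * T) * (S 0 * ρ ^ k) :=
          mul_le_mul_of_nonneg_left (hSgeo k) (Real.exp_pos _).le
      _ = E0 * ρ ^ k := by rw [hE0]; ring
  -- summability and the limit function
  have hgeoS : Summable fun i : ℕ => E0 * ρ ^ i :=
    (summable_geometric_of_lt_one hρ0 hρ1).mul_left E0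
  have hsumm : ∀ t, t ∈ Icc (0:ℝ) T → Summable (fun i => d i t) := fun t ht =>
    Summable.of_norm_bounded hgeoS (fun i => hdb i t ht)
  set uinf : ℝ → Fin p → ℝ := fun t => u 0 t + ∑' i, d i t with huinf
  have htel : ∀ k t, u k t = u 0 t + ∑ i ∈ Finset.range k, d i t := by
    intro k t
    have := Finset.sum_range_sub (f := fun i => u i t) k
    rw [hd]
    simp only []
    rw [this]
    abel
  have htail : ∀ t, t ∈ Icc (0:ℝ) T → ∀ k, ‖uinf t - u k t‖ ≤ E0 * ρ ^ k * (1 - ρ)⁻¹ := by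
    intro t ht k
    have hsp := hsumm t ht
    have hsplit := Summable.sum_add_tsum_nat_add (f := fun i => d i t) k hsp
    have h1 : uinf t - u k t = ∑' i, d (i + k) t := by
      rw [huinf]
      simp only []
      rw [htel k t, ← hsplit]
      abel
    have hs2 : Summable (fun i : ℕ => E0 * ρ ^ k * ρ ^ i) :=
      (summable_geometric_of_lt_one hρ0 hρ1).mul_left _
    have hs2' : Summable (fun i : ℕ => ‖d (i + k) t‖) := by
      apply Summable.of_nonneg_of_le (fun i => norm_nonneg _) ?_ hs2
      intro i
      calc ‖d (i + k) t‖ ≤ E0 * ρ ^ (i + k) := hdb (i + k) t ht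
        _ = E0 * ρ ^ k * ρ ^ i := by rw [pow_add]; ring
    rw [h1]
    calc ‖∑' i, d (i + k) t‖ ≤ ∑' i, ‖d (i + k) t‖ := norm_tsum_le_tsum_norm hs2'
      _ ≤ ∑' i : ℕ, E0 * ρ ^ k * ρ ^ i := by
          apply Summable.tsum_le_tsum ?_ hs2' hs2
          intro i
          calc ‖d (i + k) t‖ ≤ E0 * ρ ^ (i + k) := hdb (i + k) t ht
            _ = E0 * ρ ^ k * ρ ^ i := by rw [pow_add]; ring
      _ = E0 * ρ ^ k * (1 - ρ)⁻¹ := by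
          rw [tsum_mul_left, tsum_geometric_of_lt_one hρ0 hρ1]
  -- uniform convergence of inputs
  have hten : Tendsto (fun k : ℕ => E0 * ρ ^ k * (1 - ρ)⁻¹) atTop (nhds 0) := by
    have h1 := tendsto_pow_atTop_nhds_zero_of_lt_one hρ0 hρ1
    have h2 := (h1.const_mul E0).mul_const (1 - ρ)⁻¹
    simpa using h2
  have hUnifU : TendstoUniformlyOn u uinf atTop (Icc 0 T) := by
    rw [Metric.tendstoUniformlyOn_iff]
    intro ε hε
    filter_upwards [hten.eventually_lt_const hε] with k hk t ht
    rw [dist_eq_norm]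
    exact lt_of_le_of_lt (htail t ht k) hk
  have huinfc : ContinuousOn uinf (Icc 0 T) :=
    hUnifU.continuousOn (Eventually.of_forall hucont).frequently
  -- uniform convergence of outputs
  have hYdiff : ∀ k t, t ∈ Icc (0:ℝ) T → Y uinf t - Y (u k) t =
      ∫ τ in (0:ℝ)..t,
        C.mulVec ((NormedSpace.exp ((t - τ) • A)).mulVec
          (B.mulVec (uinf τ - u k τ))) := by
    intro k t ht
    rw [hY uinf t, hY (u k) t]
    have hi1 := ILCAux.integrand_intervalIntegrable A C _ (hinner uinf huinfc) ht
    have hi2 := ILCAux.integrand_intervalIntegrable A C _ (hinner (u k) (hucont k)) ht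
    calc (C.mulVec ((NormedSpace.exp (t • A)).mulVec x₀) +
            ∫ τ in (0:ℝ)..t, C.mulVec ((NormedSpace.exp ((t - τ) • A)).mulVec
              (B.mulVec (uinf τ) + w τ)))
          - (C.mulVec ((NormedSpace.exp (t • A)).mulVec x₀) +
            ∫ τ in (0:ℝ)..t, C.mulVec ((NormedSpace.exp ((t - τ) • A)).mulVec
              (B.mulVec (u k τ) + w τ)))
        = (∫ τ in (0:ℝ)..t, C.mulVec ((NormedSpace.exp ((t - τ) • A)).mulVec
              (B.mulVec (uinf τ) + w τ)))
          - ∫ τ in (0:ℝ)..t, C.mulVec ((NormedSpace.exp ((t - τ) • A)).mulVec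
              (B.mulVec (u k τ) + w τ)) := by abel
      _ = ∫ τ in (0:ℝ)..t,
            C.mulVec ((NormedSpace.exp ((t - τ) • A)).mulVec
              (B.mulVec (uinf τ - u k τ))) := by
          rw [← intervalIntegral.integral_sub hi1 hi2]
          apply intervalIntegral.integral_congr
          intro τ _
          exact ILCAux.diff_mulVec _ _ _ _ _ _
  have hYbound : ∀ k t, t ∈ Icc (0:ℝ) T →
      ‖Y uinf t - Y (u k) t‖ ≤ κY * (cB * (E0 * ρ ^ k * (1 - ρ)⁻¹) * T) := by
    intro k t ht
    have hfc : ContinuousOn (fun τ => B.mulVec (uinf τ - u k τ)) (Icc 0 T) :=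
      (ILCAux.mulVec_continuous B).comp_continuousOn (huinfc.sub (hucont k))
    have hkey : ∀ τ ∈ Icc (0:ℝ) t, ‖B.mulVec (uinf τ - u k τ)‖
        ≤ cB * (E0 * ρ ^ k * (1 - ρ)⁻¹) := by
      intro τ hτ
      calc ‖B.mulVec (uinf τ - u k τ)‖ ≤ cB * ‖uinf τ - u k τ‖ := hBv _
        _ ≤ cB * (E0 * ρ ^ k * (1 - ρ)⁻¹) :=
            mul_le_mul_of_nonneg_left
              (htail τ ⟨hτ.1, le_trans hτ.2 ht.2⟩ k) hcB0.le
    have hb := hκY _ hfc _ continuousOn_const t ht hkey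
    rw [hYdiff k t ht]
    have hIc : (∫ _ in (0:ℝ)..t, cB * (E0 * ρ ^ k * (1 - ρ)⁻¹))
        = t * (cB * (E0 * ρ ^ k * (1 - ρ)⁻¹)) := by
      rw [intervalIntegral.integral_const, smul_eq_mul, sub_zero]
    rw [hIc] at hb
    have hconst_nn : 0 ≤ cB * (E0 * ρ ^ k * (1 - ρ)⁻¹) := by
      have : 0 ≤ (1 - ρ)⁻¹ := by
        apply inv_nonneg.mpr
        linarith
      positivity
    calc ‖∫ τ in (0:ℝ)..t,
            C.mulVec ((NormedSpace.exp ((t - τ) • A)).mulVec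
              (B.mulVec (uinf τ - u k τ)))‖
        ≤ κY * (t * (cB * (E0 * ρ ^ k * (1 - ρ)⁻¹))) := hb
      _ ≤ κY * (T * (cB * (E0 * ρ ^ k * (1 - ρ)⁻¹))) := by
          apply mul_le_mul_of_nonneg_left ?_ hκY0.le
          exact mul_le_mul_of_nonneg_right ht.2 hconst_nn
      _ = κY * (cB * (E0 * ρ ^ k * (1 - ρ)⁻¹) * T) := by ring
  have htenY : Tendsto (fun k : ℕ => κY * (cB * (E0 * ρ ^ k * (1 - ρ)⁻¹) * T)) atTop (nhds 0) := by
    have h1 := tendsto_pow_atTop_nhds_zero_of_lt_one hρ0 hρ1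
    have h2 : Tendsto (fun k : ℕ => κY * cB * E0 * (1 - ρ)⁻¹ * T * ρ ^ k) atTop (nhds 0) := by
      simpa using h1.const_mul (κY * cB * E0 * (1 - ρ)⁻¹ * T)
    have h3 : (fun k : ℕ => κY * (cB * (E0 * ρ ^ k * (1 - ρ)⁻¹) * T))
        = fun k : ℕ => κY * cB * E0 * (1 - ρ)⁻¹ * T * ρ ^ k := by
      funext k
      ring
    rw [h3]
    exact h2
  have hUnifY : TendstoUniformlyOn (fun k => Y (u k)) (Y uinf) atTop (Icc 0 T) := by
    rw [Metric.tendstoUniformlyOn_iff]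
    intro ε hε
    filter_upwards [htenY.eventually_lt_const hε] with k hk t ht
    rw [dist_eq_norm]
    exact lt_of_le_of_lt (hYbound k t ht) hk
  exact ⟨uinf, huinfc, hUnifU, hUnifY⟩
end

section
/- Let y_d : [0,T] → ℝ^q be continuously differentiable, Υ ∈ ℝ^{p×q}, u₀ : [0,T] → ℝ^p continuous, and let u_{k+1}(t) = u_k(t) + Υ·(y_d′(t) − z(u_k)(t)) be the D-type ILC iteration. Assume every complex eigenvalue of I_p − Υ·C·B has modulus strictly less than 1, and assume y_d is trackable, witnessed by a continuous u_d : [0,T] → ℝ^p with y(u_d)(t) = y_d(t) for all t ∈ [0,T]. Then u_k converges to u_d uniformly on [0,T], and sup_{t∈[0,T]} ‖y(u_k)(t) − y_d(t)‖ → 0 as k → ∞. -/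
open MeasureTheory Set Filter

namespace DtypeILC

section Spectral

attribute [local instance] Matrix.linftyOpNormedAddCommGroup Matrix.linftyOpSemiNormedRing
  Matrix.linftyOpNormedRing Matrix.linftyOpNormedAlgebra

lemma norm_map_ofReal {p : ℕ} (M : Matrix (Fin p) (Fin p) ℝ) :
    ‖M.map Complex.ofReal‖ = ‖M‖ := by
  rw [Matrix.linfty_opNorm_def, Matrix.linfty_opNorm_def]
  congr 1
  apply Finset.sup_congr rfl
  intro i _
  simp [Matrix.map_apply]

lemma exists_pow_norm_lt {p : ℕ} (M : Matrix (Fin p) (Fin p) ℝ)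
    (hspec : ∀ μ ∈ spectrum ℂ (M.map Complex.ofReal), ‖μ‖ < 1) :
    ∃ N : ℕ, 0 < N ∧ ‖M ^ N‖ < 1 := by
  set a : Matrix (Fin p) (Fin p) ℂ := M.map Complex.ofReal with ha
  have hrad : spectralRadius ℂ a < 1 := by
    rcases (spectrum ℂ a).eq_empty_or_nonempty with h | h
    · rw [spectralRadius, h]
      simp
    · have := spectrum.spectralRadius_lt_of_forall_lt_of_nonempty h
        (r := 1) (fun k hk => by
          have h2 : ‖k‖ < 1 := by exact hspec k hk
          exact_mod_cast h2)
      simpa using this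
  have hg := spectrum.pow_nnnorm_pow_one_div_tendsto_nhds_spectralRadius a
  obtain ⟨c, hc1, hc2⟩ := exists_between hrad
  have hev : ∀ᶠ n : ℕ in atTop, (‖a ^ n‖₊ : ENNReal) ^ (1 / (n:ℝ)) < c :=
    hg.eventually_lt_const hc1
  obtain ⟨N, hN, hN1⟩ := (hev.and (eventually_ge_atTop 1)).exists
  refine ⟨N, hN1, ?_⟩
  have hNne : (N : ℝ) ≠ 0 := Nat.cast_ne_zero.mpr (Nat.one_le_iff_ne_zero.mp hN1)
  have hx : (‖a ^ N‖₊ : ENNReal) < c ^ N := by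
    have : (‖a ^ N‖₊ : ENNReal) = ((‖a ^ N‖₊ : ENNReal) ^ (1 / (N:ℝ))) ^ N := by
      rw [← ENNReal.rpow_natCast (((‖a ^ N‖₊ : ENNReal)) ^ (1 / (N:ℝ))) N,
        ← ENNReal.rpow_mul, one_div, inv_mul_cancel₀ hNne, ENNReal.rpow_one]
    rw [this]
    exact ENNReal.pow_lt_pow_left (Nat.one_le_iff_ne_zero.mp hN1) hN
  have hx1 : (‖a ^ N‖₊ : ENNReal) < 1 :=
    lt_of_lt_of_le hx (pow_le_one' hc2.le N)
  have hnn : ‖a ^ N‖₊ < 1 := by exact_mod_cast hx1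
  have han : ‖a ^ N‖ < 1 := hnn
  have : a ^ N = (M ^ N).map Complex.ofReal := by
    rw [ha]
    rw [show M.map Complex.ofReal = Complex.ofRealHom.mapMatrix M from rfl,
      show (M ^ N).map Complex.ofReal = Complex.ofRealHom.mapMatrix (M ^ N) from rfl]
    exact (map_pow _ M N).symm
  rw [this, norm_map_ofReal] at han
  exact han

lemma exists_gauge {p : ℕ} (M : Matrix (Fin p) (Fin p) ℝ)
    (hspec : ∀ μ ∈ spectrum ℂ (M.map Complex.ofReal), ‖μ‖ < 1) :
    ∃ (g : (Fin p → ℝ) → ℝ) (r Cg : ℝ), 0 < r ∧ r < 1 ∧ 0 ≤ Cg ∧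
      (∀ x, ‖x‖ ≤ g x) ∧ (∀ x, g x ≤ Cg * ‖x‖) ∧
      (∀ x y, g (x + y) ≤ g x + g y) ∧ (∀ x, g (-x) = g x) ∧
      (∀ x, g (M.mulVec x) ≤ r * g x) := by
  obtain ⟨N, hN0, hMN⟩ := exists_pow_norm_lt M hspec
  set c : ℝ := max ‖M ^ N‖ (1/2) with hc
  have hc0 : 0 < c := lt_of_lt_of_le (by norm_num) (le_max_right _ _)
  have hc1 : c < 1 := max_lt hMN (by norm_num)
  set r : ℝ := c ^ (1 / (N : ℝ)) with hrdef
  have hNne : (N : ℝ) ≠ 0 := Nat.cast_ne_zero.mpr hN0.ne'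
  have hr0 : 0 < r := Real.rpow_pos_of_pos hc0 _
  have hr1 : r < 1 := Real.rpow_lt_one hc0.le hc1 (by positivity)
  have hrN : r ^ N = c := by
    rw [hrdef, ← Real.rpow_natCast (c ^ (1/(N:ℝ))) N, ← Real.rpow_mul hc0.le,
      one_div, inv_mul_cancel₀ hNne, Real.rpow_one]
  set s : ℝ := r⁻¹ with hsdef
  have hs0 : 0 < s := inv_pos.mpr hr0
  set g : (Fin p → ℝ) → ℝ := fun x => ∑ j ∈ Finset.range N, s ^ j * ‖(M ^ j).mulVec x‖
    with hgdef
  have hterm : ∀ (x : Fin p → ℝ) (j : ℕ), 0 ≤ s ^ j * ‖(M ^ j).mulVec x‖ :=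
    fun x j => mul_nonneg (pow_nonneg hs0.le _) (norm_nonneg _)
  refine ⟨g, r, ∑ j ∈ Finset.range N, s ^ j * ‖M ^ j‖, hr0, hr1,
    Finset.sum_nonneg fun j _ => mul_nonneg (pow_nonneg hs0.le _) (norm_nonneg _),
    ?_, ?_, ?_, ?_, ?_⟩
  · intro x
    have h0 : ‖x‖ = s ^ 0 * ‖(M ^ 0).mulVec x‖ := by simp [Matrix.one_mulVec]
    rw [h0]
    exact Finset.single_le_sum (fun j _ => hterm x j) (Finset.mem_range.mpr hN0)
  · intro x
    rw [hgdef, Finset.sum_mul]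
    refine Finset.sum_le_sum fun j _ => ?_
    rw [mul_assoc]
    exact mul_le_mul_of_nonneg_left (Matrix.linfty_opNorm_mulVec _ _) (pow_nonneg hs0.le _)
  · intro x y
    rw [hgdef, ← Finset.sum_add_distrib]
    refine Finset.sum_le_sum fun j _ => ?_
    rw [← mul_add]
    refine mul_le_mul_of_nonneg_left ?_ (pow_nonneg hs0.le _)
    rw [Matrix.mulVec_add]
    exact norm_add_le _ _
  · intro x
    simp [hgdef, Matrix.mulVec_neg]
  · intro x
    have key : ∀ j : ℕ, (M ^ j).mulVec (M.mulVec x) = (M ^ (j+1)).mulVec x := fun j => by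
      rw [Matrix.mulVec_mulVec, ← pow_succ]
    have hgM : g (M.mulVec x) = r * ∑ j ∈ Finset.range N, s ^ (j+1) * ‖(M ^ (j+1)).mulVec x‖ := by
      rw [hgdef, Finset.mul_sum]
      refine Finset.sum_congr rfl fun j _ => ?_
      rw [key j, ← mul_assoc]
      congr 1
      rw [pow_succ, hsdef]
      field_simp
    have hshift : ∑ j ∈ Finset.range N, s ^ (j+1) * ‖(M ^ (j+1)).mulVec x‖
        = g x - ‖x‖ + s ^ N * ‖(M ^ N).mulVec x‖ := by
      have h1 := Finset.sum_range_succ' (fun j => s ^ j * ‖(M ^ j).mulVec x‖) N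
      have h2 := Finset.sum_range_succ (fun j => s ^ j * ‖(M ^ j).mulVec x‖) N
      rw [h2] at h1
      have h0 : s ^ 0 * ‖(M ^ 0).mulVec x‖ = ‖x‖ := by simp [Matrix.one_mulVec]
      rw [h0] at h1
      rw [hgdef]
      linarith [h1]
    have hlast : s ^ N * ‖(M ^ N).mulVec x‖ ≤ ‖x‖ := by
      have h1 : ‖(M ^ N).mulVec x‖ ≤ c * ‖x‖ :=
        le_trans (Matrix.linfty_opNorm_mulVec _ _)
          (mul_le_mul_of_nonneg_right (le_max_left _ _) (norm_nonneg _))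
      have hsN : s ^ N = c⁻¹ := by rw [hsdef, inv_pow, hrN]
      calc s ^ N * ‖(M ^ N).mulVec x‖ ≤ s ^ N * (c * ‖x‖) := by
            exact mul_le_mul_of_nonneg_left h1 (pow_nonneg hs0.le _)
        _ = ‖x‖ := by rw [hsN, ← mul_assoc, inv_mul_cancel₀ hc0.ne', one_mul]
    rw [hgM, hshift]
    have : g x - ‖x‖ + s ^ N * ‖(M ^ N).mulVec x‖ ≤ g x := by linarith
    exact mul_le_mul_of_nonneg_left this hr0.le

lemma exists_family_bound {a b : ℕ} {K : Set ℝ} (hK : IsCompact K)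
    {F : ℝ → Matrix (Fin a) (Fin b) ℝ} (hF : ContinuousOn F K) :
    ∃ κ : ℝ, 0 ≤ κ ∧ ∀ t ∈ K, ∀ x : Fin b → ℝ, ‖(F t).mulVec x‖ ≤ κ * ‖x‖ := by
  obtain ⟨Cb, hCb⟩ := hK.exists_bound_of_continuousOn hF
  refine ⟨max Cb 0, le_max_right _ _, fun t ht x => ?_⟩
  refine le_trans (Matrix.linfty_opNorm_mulVec _ _) ?_
  exact mul_le_mul_of_nonneg_right (le_trans (hCb t ht) (le_max_left _ _)) (norm_nonneg _)

end Spectral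

section ExpFacts

variable {n : ℕ} (A : Matrix (Fin n) (Fin n) ℝ)

lemma continuous_expSmul : Continuous fun t : ℝ => NormedSpace.exp (t • A) := by
  letI : SeminormedRing (Matrix (Fin n) (Fin n) ℝ) := Matrix.linftyOpSemiNormedRing
  letI : NormedRing (Matrix (Fin n) (Fin n) ℝ) := Matrix.linftyOpNormedRing
  letI : NormedAlgebra ℝ (Matrix (Fin n) (Fin n) ℝ) := Matrix.linftyOpNormedAlgebra
  letI : NormedAlgebra ℚ (Matrix (Fin n) (Fin n) ℝ) := NormedAlgebra.restrictScalars ℚ ℝ _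
  exact NormedSpace.exp_continuous.comp (continuous_id.smul continuous_const)

section DerivExp

attribute [local instance] Matrix.linftyOpSemiNormedRing Matrix.linftyOpNormedRing
  Matrix.linftyOpNormedAlgebra

lemma hasDerivAt_expSmul (t : ℝ) :
    HasDerivAt (fun s : ℝ => NormedSpace.exp (s • A)) (A * NormedSpace.exp (t • A)) t := by
  letI : SeminormedRing (Matrix (Fin n) (Fin n) ℝ) := Matrix.linftyOpSemiNormedRing
  letI : NormedRing (Matrix (Fin n) (Fin n) ℝ) := Matrix.linftyOpNormedRing
  letI : NormedAlgebra ℝ (Matrix (Fin n) (Fin n) ℝ) := Matrix.linftyOpNormedAlgebra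
  exact hasDerivAt_exp_smul_const' A t

end DerivExp

lemma exp_smul_add (t τ : ℝ) :
    NormedSpace.exp ((t + τ) • A)
      = NormedSpace.exp (t • A) * NormedSpace.exp (τ • A) := by
  rw [add_smul]
  exact Matrix.exp_add_of_commute _ _ (((Commute.refl A).smul_left t).smul_right τ)

lemma exp_smul_sub (t τ : ℝ) :
    NormedSpace.exp ((t - τ) • A)
      = NormedSpace.exp (t • A) * NormedSpace.exp ((-τ) • A) := by
  rw [← exp_smul_add, sub_eq_add_neg]

lemma exp_smul_mul_exp_neg_smul (t : ℝ) :
    NormedSpace.exp (t • A) * NormedSpace.exp ((-t) • A) = 1 := by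
  rw [← exp_smul_add]
  simp [NormedSpace.exp_zero]

end ExpFacts

section Core

open NormedSpace

variable {T : ℝ} {n p q : ℕ} {A : Matrix (Fin n) (Fin n) ℝ} {B : Matrix (Fin n) (Fin p) ℝ}
  {w : ℝ → Fin n → ℝ}

lemma continuousOn_mulVec {α : Type*} [TopologicalSpace α] {a b : ℕ} {s : Set α}
    {M : α → Matrix (Fin a) (Fin b) ℝ} {x : α → Fin b → ℝ}
    (hM : ContinuousOn M s) (hx : ContinuousOn x s) :
    ContinuousOn (fun t => (M t).mulVec (x t)) s :=
  (continuous_fst.matrix_mulVec continuous_snd).comp_continuousOn' (f := fun t => (M t, x t)) (ContinuousOn.prodMk hM hx)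

/-- The "shifted primitive" appearing after factoring the convolution. -/
noncomputable def Gv (A : Matrix (Fin n) (Fin n) ℝ) (B : Matrix (Fin n) (Fin p) ℝ)
    (w : ℝ → Fin n → ℝ) (v : ℝ → Fin p → ℝ) (t : ℝ) : Fin n → ℝ :=
  ∫ τ in (0:ℝ)..t, (exp ((-τ) • A)).mulVec (B.mulVec (v τ) + w τ)

lemma cont_integrand (hw : ContinuousOn w (Icc 0 T)) {v : ℝ → Fin p → ℝ}
    (hv : ContinuousOn v (Icc 0 T)) :
    ContinuousOn (fun τ => (exp ((-τ) • A)).mulVec (B.mulVec (v τ) + w τ)) (Icc 0 T) :=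
  continuousOn_mulVec (((continuous_expSmul A).comp continuous_neg).continuousOn)
    ((continuousOn_mulVec continuousOn_const hv).add hw)

lemma intervalIntegrable_of_continuousOn {E : Type*} [NormedAddCommGroup E] {f : ℝ → E}
    (hf : ContinuousOn f (Icc 0 T)) {t : ℝ} (ht : t ∈ Icc 0 T) :
    IntervalIntegrable f volume 0 t :=
  (hf.mono (by rw [uIcc_of_le ht.1]; exact Icc_subset_Icc le_rfl ht.2)).intervalIntegrable

lemma hasDerivWithinAt_primitive {E : Type*} [NormedAddCommGroup E] [NormedSpace ℝ E]
    [CompleteSpace E] {f : ℝ → E} (hf : ContinuousOn f (Icc 0 T)) {t : ℝ} (ht : t ∈ Icc 0 T) :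
    HasDerivWithinAt (fun s => ∫ τ in (0:ℝ)..s, f τ) (f t) (Icc 0 T) t := by
  haveI : Fact (t ∈ Icc (0:ℝ) T) := ⟨ht⟩
  exact intervalIntegral.integral_hasDerivWithinAt_right
    (intervalIntegrable_of_continuousOn hf ht)
    (hf.stronglyMeasurableAtFilter_nhdsWithin measurableSet_Icc t)
    (hf t ht)

lemma contOn_G (hw : ContinuousOn w (Icc 0 T)) {v : ℝ → Fin p → ℝ}
    (hv : ContinuousOn v (Icc 0 T)) : ContinuousOn (Gv A B w v) (Icc 0 T) := fun t ht =>
  (hasDerivWithinAt_primitive (cont_integrand hw hv) ht).continuousWithinAt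

noncomputable def mulVecCLM {a b : ℕ} (Q : Matrix (Fin a) (Fin b) ℝ) :
    (Fin b → ℝ) →L[ℝ] (Fin a → ℝ) :=
  LinearMap.toContinuousLinearMap Q.mulVecLin

@[simp] lemma mulVecCLM_apply {a b : ℕ} (Q : Matrix (Fin a) (Fin b) ℝ) (x : Fin b → ℝ) :
    mulVecCLM Q x = Q.mulVec x := rfl

lemma integral_rep (hw : ContinuousOn w (Icc 0 T)) {v : ℝ → Fin p → ℝ}
    (hv : ContinuousOn v (Icc 0 T)) {t : ℝ} (ht : t ∈ Icc 0 T)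
    {a : ℕ} (P : Matrix (Fin a) (Fin n) ℝ) :
    (∫ τ in (0:ℝ)..t, P.mulVec ((exp ((t - τ) • A)).mulVec (B.mulVec (v τ) + w τ)))
      = P.mulVec ((exp (t • A)).mulVec (Gv A B w v t)) := by
  have h1 : ∀ τ : ℝ, P.mulVec ((exp ((t - τ) • A)).mulVec (B.mulVec (v τ) + w τ))
      = mulVecCLM (P * exp (t • A))
          ((exp ((-τ) • A)).mulVec (B.mulVec (v τ) + w τ)) := by
    intro τ
    rw [exp_smul_sub]
    simp [Matrix.mulVec_mulVec, Matrix.mul_assoc]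
  calc (∫ τ in (0:ℝ)..t, P.mulVec ((exp ((t - τ) • A)).mulVec (B.mulVec (v τ) + w τ)))
      = ∫ τ in (0:ℝ)..t, mulVecCLM (P * exp (t • A))
          ((exp ((-τ) • A)).mulVec (B.mulVec (v τ) + w τ)) :=
        intervalIntegral.integral_congr (fun τ _ => h1 τ)
    _ = mulVecCLM (P * exp (t • A)) (Gv A B w v t) :=
        ContinuousLinearMap.intervalIntegral_comp_comm _
          (intervalIntegrable_of_continuousOn (cont_integrand hw hv) ht)
    _ = P.mulVec ((exp (t • A)).mulVec (Gv A B w v t)) := by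
        rw [mulVecCLM_apply, ← Matrix.mulVec_mulVec]

lemma hasDerivWithinAt_rep {a : ℕ} (C : Matrix (Fin a) (Fin n) ℝ) (x₀ : Fin n → ℝ)
    (hw : ContinuousOn w (Icc 0 T)) {v : ℝ → Fin p → ℝ}
    (hv : ContinuousOn v (Icc 0 T)) {t : ℝ} (ht : t ∈ Icc 0 T) :
    HasDerivWithinAt (fun s => C.mulVec ((exp (s • A)).mulVec (x₀ + Gv A B w v s)))
      (C.mulVec ((A * exp (t • A)).mulVec (x₀ + Gv A B w v t))
        + C.mulVec (B.mulVec (v t) + w t)) (Icc 0 T) t := by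
  letI : SeminormedRing (Matrix (Fin n) (Fin n) ℝ) := Matrix.linftyOpSemiNormedRing
  letI : NormedRing (Matrix (Fin n) (Fin n) ℝ) := Matrix.linftyOpNormedRing
  letI : NormedAlgebra ℝ (Matrix (Fin n) (Fin n) ℝ) := Matrix.linftyOpNormedAlgebra
  have hΦ : ∃ Φ : Matrix (Fin n) (Fin n) ℝ →L[ℝ] ((Fin n → ℝ) →L[ℝ] (Fin n → ℝ)),
      ∀ (M : Matrix (Fin n) (Fin n) ℝ) (x : Fin n → ℝ), Φ M x = M.mulVec x := by
    refine ⟨LinearMap.toContinuousLinearMap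
      { toFun := fun M => mulVecCLM M
        map_add' := fun M N => by ext x; simp [Matrix.add_mulVec]
        map_smul' := fun c M => by ext x; simp [Matrix.smul_mulVec] }, fun M x => rfl⟩
  obtain ⟨Φ, hΦ⟩ := hΦ
  have h1 : HasDerivWithinAt (fun s : ℝ => exp (s • A)) (A * exp (t • A)) (Icc 0 T) t :=
    (hasDerivAt_expSmul A t).hasDerivWithinAt
  have hc : HasDerivWithinAt (fun s : ℝ => Φ (exp (s • A))) (Φ (A * exp (t • A)))
      (Icc 0 T) t := Φ.hasFDerivAt.comp_hasDerivWithinAt t h1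
  have h2 : HasDerivWithinAt (fun s => x₀ + Gv A B w v s)
      ((exp ((-t) • A)).mulVec (B.mulVec (v t) + w t)) (Icc 0 T) t :=
    (hasDerivWithinAt_primitive (cont_integrand hw hv) ht).const_add x₀
  have h3 := hc.clm_apply h2
  simp only [hΦ] at h3
  have h4 : HasDerivWithinAt (fun s => (exp (s • A)).mulVec (x₀ + Gv A B w v s))
      ((A * exp (t • A)).mulVec (x₀ + Gv A B w v t) + (B.mulVec (v t) + w t))
      (Icc 0 T) t := by
    have heq : (exp (t • A)).mulVec ((exp ((-t) • A)).mulVec (B.mulVec (v t) + w t))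
        = B.mulVec (v t) + w t := by
      rw [Matrix.mulVec_mulVec, exp_smul_mul_exp_neg_smul, Matrix.one_mulVec]
    rwa [heq] at h3
  have h5 := (mulVecCLM C).hasFDerivAt.comp_hasDerivWithinAt t h4
  have h6 : HasDerivWithinAt (fun s => C.mulVec ((exp (s • A)).mulVec (x₀ + Gv A B w v s)))
      (C.mulVec ((A * exp (t • A)).mulVec (x₀ + Gv A B w v t) + (B.mulVec (v t) + w t)))
      (Icc 0 T) t := h5
  rwa [Matrix.mulVec_add] at h6

lemma contOn_rep {a : ℕ} (C : Matrix (Fin a) (Fin n) ℝ) (x₀ : Fin n → ℝ)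
    (hw : ContinuousOn w (Icc 0 T)) {v : ℝ → Fin p → ℝ}
    (hv : ContinuousOn v (Icc 0 T)) :
    ContinuousOn (fun t => C.mulVec ((A * exp (t • A)).mulVec (x₀ + Gv A B w v t))
      + C.mulVec (B.mulVec (v t) + w t)) (Icc 0 T) :=
  (continuousOn_mulVec continuousOn_const (continuousOn_mulVec
      ((continuous_const.matrix_mul (continuous_expSmul A)).continuousOn)
      (continuousOn_const.add (contOn_G hw hv)))).add
    (continuousOn_mulVec continuousOn_const
      ((continuousOn_mulVec continuousOn_const hv).add hw))

end Core

end DtypeILC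

/-- **Theorem 3: trackability gives perfect tracking.** Under the spectral
condition on `I_p − Υ·C·B`, if `y_d` is trackable with continuous witness `u_d`, then the
D-type ILC inputs converge uniformly to `u_d` and the outputs converge uniformly to `y_d`
on `[0,T]`. -/
theorem dtype_ilc_converges_to_desired_input
    (T : ℝ) (hT : 0 < T) (n p q : ℕ)
    (A : Matrix (Fin n) (Fin n) ℝ) (B : Matrix (Fin n) (Fin p) ℝ)
    (C : Matrix (Fin q) (Fin n) ℝ) (x₀ : Fin n → ℝ)
    (w : ℝ → Fin n → ℝ) (hw : ContinuousOn w (Icc 0 T))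
    (Y : (ℝ → Fin p → ℝ) → ℝ → Fin q → ℝ)
    (hY : ∀ (v : ℝ → Fin p → ℝ) (t : ℝ),
      Y v t = C.mulVec ((NormedSpace.exp (t • A)).mulVec x₀) +
        ∫ τ in (0:ℝ)..t,
          C.mulVec ((NormedSpace.exp ((t - τ) • A)).mulVec (B.mulVec (v τ) + w τ)))
    (Z : (ℝ → Fin p → ℝ) → ℝ → Fin q → ℝ)
    (hZ : ∀ (v : ℝ → Fin p → ℝ) (t : ℝ),
      Z v t = C.mulVec ((A * NormedSpace.exp (t • A)).mulVec x₀) +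
        C.mulVec (B.mulVec (v t) + w t) +
        ∫ τ in (0:ℝ)..t,
          C.mulVec ((A * NormedSpace.exp ((t - τ) • A)).mulVec (B.mulVec (v τ) + w τ)))
    (Υ : Matrix (Fin p) (Fin q) ℝ)
    (yd yd' : ℝ → Fin q → ℝ)
    (hyd : ∀ t ∈ Icc (0:ℝ) T, HasDerivWithinAt yd (yd' t) (Icc 0 T) t)
    (hyd' : ContinuousOn yd' (Icc 0 T))
    (u : ℕ → ℝ → Fin p → ℝ) (hu0 : ContinuousOn (u 0) (Icc 0 T))
    (hrec : ∀ (k : ℕ) (t : ℝ), u (k + 1) t = u k t + Υ.mulVec (yd' t - Z (u k) t))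
    (hspec : ∀ μ ∈ spectrum ℂ
        (((1 : Matrix (Fin p) (Fin p) ℝ) - Υ * C * B).map Complex.ofReal),
      ‖μ‖ < 1)
    (ud : ℝ → Fin p → ℝ) (hud : ContinuousOn ud (Icc 0 T))
    (htrack : ∀ t ∈ Icc (0:ℝ) T, Y ud t = yd t) :
    TendstoUniformlyOn u ud atTop (Icc 0 T) ∧
      TendstoUniformlyOn (fun k => Y (u k)) yd atTop (Icc 0 T) := by
  set K : Set ℝ := Icc (0:ℝ) T with hK
  set M : Matrix (Fin p) (Fin p) ℝ := (1 : Matrix (Fin p) (Fin p) ℝ) - Υ * C * B with hM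
  -- representations
  have hYrep : ∀ (v : ℝ → Fin p → ℝ), ContinuousOn v K → ∀ t ∈ K,
      Y v t = C.mulVec ((NormedSpace.exp (t • A)).mulVec (x₀ + DtypeILC.Gv A B w v t)) := by
    intro v hv t ht
    rw [hY, DtypeILC.integral_rep hw hv ht C]
    simp [Matrix.mulVec_add]
  have hZrep : ∀ (v : ℝ → Fin p → ℝ), ContinuousOn v K → ∀ t ∈ K,
      Z v t = C.mulVec ((A * NormedSpace.exp (t • A)).mulVec (x₀ + DtypeILC.Gv A B w v t))
        + C.mulVec (B.mulVec (v t) + w t) := by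
    intro v hv t ht
    rw [hZ]
    have h1 : (∫ τ in (0:ℝ)..t,
        C.mulVec ((A * NormedSpace.exp ((t - τ) • A)).mulVec (B.mulVec (v τ) + w τ)))
        = ∫ τ in (0:ℝ)..t,
          (C * A).mulVec ((NormedSpace.exp ((t - τ) • A)).mulVec (B.mulVec (v τ) + w τ)) :=
      intervalIntegral.integral_congr (fun τ _ => by
        simp [Matrix.mulVec_mulVec, Matrix.mul_assoc])
    rw [h1, DtypeILC.integral_rep hw hv ht (C * A)]
    simp [Matrix.mulVec_add, Matrix.mul_assoc]
    abel
  -- derivative of the output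
  have hYderiv : ∀ (v : ℝ → Fin p → ℝ), ContinuousOn v K → ∀ t ∈ K,
      HasDerivWithinAt (Y v) (Z v t) K t := by
    intro v hv t ht
    have h := DtypeILC.hasDerivWithinAt_rep (A := A) (B := B) C x₀ hw hv ht
    rw [← hZrep v hv t ht] at h
    exact h.congr (fun s hs => hYrep v hv s hs) (hYrep v hv t ht)
  -- the desired derivative equals Z ud on K
  have hzd : ∀ t ∈ K, yd' t = Z ud t := by
    intro t ht
    have h1 : HasDerivWithinAt yd (Z ud t) K t :=
      (hYderiv ud hud t ht).congr (fun s hs => (htrack s hs).symm) (htrack t ht).symm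
    have hu := uniqueDiffOn_Icc hT t ht
    exact ((hyd t ht).derivWithin hu).symm.trans (h1.derivWithin hu)
  -- continuity of the inputs
  have hucont : ∀ k, ContinuousOn (u k) K := by
    intro k
    induction k with
    | zero => exact hu0
    | succ k ih =>
      have hZc : ContinuousOn (Z (u k)) K :=
        (DtypeILC.contOn_rep C x₀ hw ih).congr (fun t ht => hZrep (u k) ih t ht)
      have hc : ContinuousOn (fun t => u k t + Υ.mulVec (yd' t - Z (u k) t)) K :=
        ih.add (DtypeILC.continuousOn_mulVec continuousOn_const (hyd'.sub hZc))
      exact hc.congr (fun t _ => hrec k t)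

  -- error functions
  set e : ℕ → ℝ → Fin p → ℝ := fun k t => ud t - u k t with he
  have hecont : ∀ k, ContinuousOn (e k) K := fun k => hud.sub (hucont k)
  have hker : ∀ k, ContinuousOn
      (fun τ => ((NormedSpace.exp ((-τ) • A)) * B).mulVec (e k τ)) K := fun k =>
    DtypeILC.continuousOn_mulVec
      ((((DtypeILC.continuous_expSmul A).comp continuous_neg).matrix_mul
        continuous_const).continuousOn) (hecont k)
  have hGdiff : ∀ k, ∀ t ∈ K,
      DtypeILC.Gv A B w ud t - DtypeILC.Gv A B w (u k) t
        = ∫ τ in (0:ℝ)..t, ((NormedSpace.exp ((-τ) • A)) * B).mulVec (e k τ) := by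
    intro k t ht
    simp only [DtypeILC.Gv]
    rw [← intervalIntegral.integral_sub
      (DtypeILC.intervalIntegrable_of_continuousOn (DtypeILC.cont_integrand hw hud) ht)
      (DtypeILC.intervalIntegrable_of_continuousOn (DtypeILC.cont_integrand hw (hucont k)) ht)]
    refine intervalIntegral.integral_congr (fun τ _ => ?_)
    rw [← Matrix.mulVec_sub, ← Matrix.mulVec_mulVec]
    congr 1
    simp only [he, Matrix.mulVec_sub, Matrix.mulVec_add]
    abel
  have herec : ∀ k, ∀ t ∈ K,
      e (k+1) t = M.mulVec (e k t)
        - (Υ * C * (A * NormedSpace.exp (t • A))).mulVec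
            (∫ τ in (0:ℝ)..t, ((NormedSpace.exp ((-τ) • A)) * B).mulVec (e k τ)) := by
    intro k t ht
    rw [← hGdiff k t ht]
    have h1 : e (k+1) t = e k t - Υ.mulVec (Z ud t - Z (u k) t) := by
      simp only [he, hrec k t, hzd t ht]
      abel
    rw [h1, hZrep ud hud t ht, hZrep (u k) (hucont k) t ht, hM]
    simp only [he, Matrix.mulVec_add, Matrix.mulVec_sub, Matrix.sub_mulVec,
      Matrix.one_mulVec, Matrix.mulVec_mulVec, Matrix.mul_assoc]
    abel
  -- gauge and constants
  obtain ⟨g, r, Cg, hr0, hr1, hCg0, hg_norm, hg_le, hg_add, hg_neg, hg_M⟩ :=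
    DtypeILC.exists_gauge M hspec
  have hg_sub : ∀ x y, g (x - y) ≤ g x + g y := fun x y => by
    rw [sub_eq_add_neg]
    exact le_trans (hg_add x (-y)) (by rw [hg_neg])
  obtain ⟨κ₁, hκ₁0, hκ₁⟩ := DtypeILC.exists_family_bound (isCompact_Icc (a := (0:ℝ)) (b := T))
    (F := fun t => Υ * C * (A * NormedSpace.exp (t • A)))
    ((continuous_const.matrix_mul (continuous_const.matrix_mul
      (DtypeILC.continuous_expSmul A))).continuousOn)
  obtain ⟨κ₂, hκ₂0, hκ₂⟩ := DtypeILC.exists_family_bound (isCompact_Icc (a := (0:ℝ)) (b := T))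
    (F := fun τ => (NormedSpace.exp ((-τ) • A)) * B)
    ((((DtypeILC.continuous_expSmul A).comp continuous_neg).matrix_mul
      continuous_const).continuousOn)
  obtain ⟨κ₃, hκ₃0, hκ₃⟩ := DtypeILC.exists_family_bound (isCompact_Icc (a := (0:ℝ)) (b := T))
    (F := fun t => C * NormedSpace.exp (t • A))
    ((continuous_const.matrix_mul (DtypeILC.continuous_expSmul A)).continuousOn)
  obtain ⟨D0, hD0⟩ := (isCompact_Icc (a := (0:ℝ)) (b := T)).exists_bound_of_continuousOn (hecont 0)
  set D : ℝ := Cg * max D0 0 with hD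
  have hD0' : 0 ≤ D := mul_nonneg hCg0 (le_max_right _ _)
  have hge0 : ∀ t ∈ K, g (e 0 t) ≤ D := fun t ht =>
    le_trans (hg_le _) (mul_le_mul_of_nonneg_left (le_trans (hD0 t ht) (le_max_left _ _)) hCg0)
  set P : ℝ := Cg * κ₁ * κ₂ with hP
  have hP0 : 0 ≤ P := mul_nonneg (mul_nonneg hCg0 hκ₁0) hκ₂0
  set r' : ℝ := (1 + r)/2 with hr'
  have hr'0 : 0 ≤ r' := by rw [hr']; linarith
  have hr'1 : r' < 1 := by rw [hr']; linarith
  set lam : ℝ := 2*(P+1)/(1-r) with hlam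
  have hlam0 : 0 < lam := by
    rw [hlam]
    have : 0 < 1 - r := by linarith
    positivity
  have hkey : r + P/lam ≤ r' := by
    have h1r : (1:ℝ) - r ≠ 0 := ((by linarith : (0:ℝ) < 1 - r)).ne'
    have hlam_eq : (1 - r)/2 * lam = P + 1 := by
      rw [hlam]
      field_simp
    have hPle : P/lam ≤ (1 - r)/2 := by
      rw [div_le_iff₀ hlam0]
      nlinarith [hlam_eq]
    rw [hr']
    linarith
  -- integral of the exponential weight
  have hexp_int : ∀ t ∈ K, (∫ τ in (0:ℝ)..t, Real.exp (lam*τ)) = (Real.exp (lam*t) - 1)/lam := by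
    intro t ht
    have h := intervalIntegral.integral_comp_mul_left (a := (0:ℝ)) (b := t) Real.exp hlam0.ne'
    rw [h, integral_exp]
    rw [mul_zero, Real.exp_zero, smul_eq_mul]
    field_simp
  have hexpcont : Continuous (fun τ : ℝ => Real.exp (lam*τ)) :=
    Real.continuous_exp.comp (continuous_const.mul continuous_id)
  -- the main inductive estimate
  have hbound : ∀ k, ∀ t ∈ K, g (e k t) ≤ D * r' ^ k * Real.exp (lam * t) := by
    intro k
    induction k with
    | zero =>
      intro t ht
      have h1 : (1:ℝ) ≤ Real.exp (lam * t) := by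
        rw [← Real.exp_zero]
        exact Real.exp_le_exp.mpr (mul_nonneg hlam0.le ht.1)
      calc g (e 0 t) ≤ D := hge0 t ht
        _ = D * r'^0 * 1 := by ring
        _ ≤ D * r'^0 * Real.exp (lam*t) := by
            exact mul_le_mul_of_nonneg_left h1 (by simpa using hD0')
    | succ k ih =>
      intro t ht
      have hsubK : Icc (0:ℝ) t ⊆ K := by rw [hK]; exact Icc_subset_Icc le_rfl ht.2
      have hIbound : ‖∫ τ in (0:ℝ)..t, ((NormedSpace.exp ((-τ) • A)) * B).mulVec (e k τ)‖
          ≤ κ₂ * (D * r'^k) * ((Real.exp (lam*t) - 1)/lam) := by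
        refine le_trans (intervalIntegral.norm_integral_le_integral_norm ht.1) ?_
        have hmono : (∫ τ in (0:ℝ)..t, ‖((NormedSpace.exp ((-τ) • A)) * B).mulVec (e k τ)‖)
            ≤ ∫ τ in (0:ℝ)..t, κ₂ * (D * r'^k) * Real.exp (lam*τ) := by
          refine intervalIntegral.integral_mono_on ht.1
            (DtypeILC.intervalIntegrable_of_continuousOn (hker k).norm ht)
            ((continuous_const.mul hexpcont).intervalIntegrable 0 t) (fun τ hτ => ?_)
          have hτK : τ ∈ K := hsubK hτ
          have h1 : ‖((NormedSpace.exp ((-τ) • A)) * B).mulVec (e k τ)‖ ≤ κ₂ * ‖e k τ‖ :=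
            hκ₂ τ hτK _
          have h2 : ‖e k τ‖ ≤ D * r'^k * Real.exp (lam*τ) :=
            le_trans (hg_norm _) (ih τ hτK)
          calc ‖((NormedSpace.exp ((-τ) • A)) * B).mulVec (e k τ)‖
              ≤ κ₂ * (D * r'^k * Real.exp (lam*τ)) :=
                le_trans h1 (mul_le_mul_of_nonneg_left h2 hκ₂0)
            _ = κ₂ * (D * r'^k) * Real.exp (lam*τ) := by ring
        rw [intervalIntegral.integral_const_mul, hexp_int t ht] at hmono
        exact hmono
      have hstep : g (e (k+1) t)
          ≤ r * (D * r'^k * Real.exp (lam*t))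
            + Cg * (κ₁ * (κ₂ * (D * r'^k) * ((Real.exp (lam*t) - 1)/lam))) := by
        calc g (e (k+1) t)
            = g (M.mulVec (e k t)
                - (Υ * C * (A * NormedSpace.exp (t • A))).mulVec
                  (∫ τ in (0:ℝ)..t, ((NormedSpace.exp ((-τ) • A)) * B).mulVec (e k τ))) := by
              rw [herec k t ht]
          _ ≤ g (M.mulVec (e k t))
              + g ((Υ * C * (A * NormedSpace.exp (t • A))).mulVec
                  (∫ τ in (0:ℝ)..t, ((NormedSpace.exp ((-τ) • A)) * B).mulVec (e k τ))) :=
              hg_sub _ _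
          _ ≤ r * g (e k t)
              + Cg * ‖(Υ * C * (A * NormedSpace.exp (t • A))).mulVec
                  (∫ τ in (0:ℝ)..t, ((NormedSpace.exp ((-τ) • A)) * B).mulVec (e k τ))‖ :=
              add_le_add (hg_M _) (hg_le _)
          _ ≤ r * (D * r'^k * Real.exp (lam*t))
              + Cg * (κ₁ * (κ₂ * (D * r'^k) * ((Real.exp (lam*t) - 1)/lam))) := by
              refine add_le_add (mul_le_mul_of_nonneg_left (ih t ht) hr0.le) ?_
              refine mul_le_mul_of_nonneg_left ?_ hCg0
              refine le_trans (hκ₁ t ht _) ?_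
              exact mul_le_mul_of_nonneg_left hIbound hκ₁0
      refine le_trans hstep ?_
      have hE1 : (1:ℝ) ≤ Real.exp (lam * t) := by
        rw [← Real.exp_zero]
        exact Real.exp_le_exp.mpr (mul_nonneg hlam0.le ht.1)
      have hQ0 : 0 ≤ D * r'^k := mul_nonneg hD0' (pow_nonneg hr'0 k)
      have h7 : (Real.exp (lam*t) - 1)/lam ≤ Real.exp (lam*t)/lam :=
        (div_le_div_iff_of_pos_right hlam0).mpr (by linarith)
      have h6 : Cg * (κ₁ * (κ₂ * (D * r'^k) * ((Real.exp (lam*t) - 1)/lam)))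
          ≤ P * (D * r'^k) * (Real.exp (lam*t)/lam) := by
        calc Cg * (κ₁ * (κ₂ * (D * r'^k) * ((Real.exp (lam*t) - 1)/lam)))
            = (P * (D * r'^k)) * ((Real.exp (lam*t) - 1)/lam) := by rw [hP]; ring
          _ ≤ (P * (D * r'^k)) * (Real.exp (lam*t)/lam) :=
              mul_le_mul_of_nonneg_left h7 (mul_nonneg hP0 hQ0)
          _ = P * (D * r'^k) * (Real.exp (lam*t)/lam) := by ring
      have hEpos : (0:ℝ) ≤ Real.exp (lam*t) := (Real.exp_pos _).le
      calc r * (D * r'^k * Real.exp (lam*t))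
            + Cg * (κ₁ * (κ₂ * (D * r'^k) * ((Real.exp (lam*t) - 1)/lam)))
          ≤ r * (D * r'^k * Real.exp (lam*t)) + P * (D * r'^k) * (Real.exp (lam*t)/lam) :=
            add_le_add le_rfl h6
        _ = (D * r'^k * Real.exp (lam*t)) * (r + P/lam) := by
            field_simp
        _ ≤ (D * r'^k * Real.exp (lam*t)) * r' :=
            mul_le_mul_of_nonneg_left hkey (mul_nonneg hQ0 hEpos)
        _ = D * r' ^ (k+1) * Real.exp (lam*t) := by rw [pow_succ]; ring

  -- final bounds
  have hfin : ∀ k, ∀ t ∈ K, ‖e k t‖ ≤ (D * Real.exp (lam*T)) * r'^k := by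
    intro k t ht
    have h1 := le_trans (hg_norm _) (hbound k t ht)
    have h2 : Real.exp (lam*t) ≤ Real.exp (lam*T) :=
      Real.exp_le_exp.mpr (mul_le_mul_of_nonneg_left ht.2 hlam0.le)
    calc ‖e k t‖ ≤ D * r'^k * Real.exp (lam*t) := h1
      _ ≤ D * r'^k * Real.exp (lam*T) :=
          mul_le_mul_of_nonneg_left h2 (mul_nonneg hD0' (pow_nonneg hr'0 k))
      _ = (D * Real.exp (lam*T)) * r'^k := by ring
  have hgeo : Tendsto (fun k : ℕ => (D * Real.exp (lam*T)) * r'^k) atTop (nhds 0) := by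
    have h := (tendsto_pow_atTop_nhds_zero_of_lt_one hr'0 hr'1).const_mul
      (D * Real.exp (lam*T))
    simpa using h
  constructor
  · rw [Metric.tendstoUniformlyOn_iff]
    intro ε hε
    filter_upwards [hgeo.eventually_lt_const hε] with k hk t ht
    rw [dist_eq_norm]
    exact lt_of_le_of_lt (hfin k t ht) hk
  · have hYbound : ∀ k, ∀ t ∈ K, ‖yd t - Y (u k) t‖
        ≤ (κ₃ * (κ₂ * ((D * Real.exp (lam*T))) * T)) * r'^k := by
      intro k t ht
      have hsubK : Icc (0:ℝ) t ⊆ K := by rw [hK]; exact Icc_subset_Icc le_rfl ht.2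
      have hform : yd t - Y (u k) t = (C * NormedSpace.exp (t • A)).mulVec
          (∫ τ in (0:ℝ)..t, ((NormedSpace.exp ((-τ) • A)) * B).mulVec (e k τ)) := by
        rw [← htrack t ht, hYrep ud hud t ht, hYrep (u k) (hucont k) t ht, ← hGdiff k t ht]
        simp only [Matrix.mulVec_add, Matrix.mulVec_sub, Matrix.mulVec_mulVec]
        abel
      rw [hform]
      have hIb : ‖∫ τ in (0:ℝ)..t, ((NormedSpace.exp ((-τ) • A)) * B).mulVec (e k τ)‖
          ≤ (κ₂ * ((D * Real.exp (lam*T)) * r'^k)) * T := by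
        refine le_trans (intervalIntegral.norm_integral_le_integral_norm ht.1) ?_
        have hmono : (∫ τ in (0:ℝ)..t, ‖((NormedSpace.exp ((-τ) • A)) * B).mulVec (e k τ)‖)
            ≤ ∫ _τ in (0:ℝ)..t, κ₂ * ((D * Real.exp (lam*T)) * r'^k) := by
          refine intervalIntegral.integral_mono_on ht.1
            (DtypeILC.intervalIntegrable_of_continuousOn (hker k).norm ht)
            (continuous_const.intervalIntegrable 0 t) (fun τ hτ => ?_)
          have hτK : τ ∈ K := hsubK hτ
          refine le_trans (hκ₂ τ hτK _) ?_
          exact mul_le_mul_of_nonneg_left (hfin k τ hτK) hκ₂0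
        refine le_trans hmono ?_
        rw [intervalIntegral.integral_const, smul_eq_mul, sub_zero]
        calc t * (κ₂ * ((D * Real.exp (lam*T)) * r'^k))
            ≤ T * (κ₂ * ((D * Real.exp (lam*T)) * r'^k)) := by
              refine mul_le_mul_of_nonneg_right ht.2 ?_
              exact mul_nonneg hκ₂0 (mul_nonneg
                (mul_nonneg hD0' (Real.exp_pos _).le) (pow_nonneg hr'0 k))
          _ = (κ₂ * ((D * Real.exp (lam*T)) * r'^k)) * T := by ring
      calc ‖(C * NormedSpace.exp (t • A)).mulVec
            (∫ τ in (0:ℝ)..t, ((NormedSpace.exp ((-τ) • A)) * B).mulVec (e k τ))‖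
          ≤ κ₃ * ‖∫ τ in (0:ℝ)..t, ((NormedSpace.exp ((-τ) • A)) * B).mulVec (e k τ)‖ :=
            hκ₃ t ht _
        _ ≤ κ₃ * ((κ₂ * ((D * Real.exp (lam*T)) * r'^k)) * T) :=
            mul_le_mul_of_nonneg_left hIb hκ₃0
        _ = (κ₃ * (κ₂ * ((D * Real.exp (lam*T))) * T)) * r'^k := by ring
    have hgeo2 : Tendsto (fun k : ℕ => (κ₃ * (κ₂ * ((D * Real.exp (lam*T))) * T)) * r'^k)
        atTop (nhds 0) := by
      have h := (tendsto_pow_atTop_nhds_zero_of_lt_one hr'0 hr'1).const_mul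
        (κ₃ * (κ₂ * ((D * Real.exp (lam*T))) * T))
      simpa using h
    rw [Metric.tendstoUniformlyOn_iff]
    intro ε hε
    filter_upwards [hgeo2.eventually_lt_const hε] with k hk t ht
    rw [dist_eq_norm]
    exact lt_of_le_of_lt (hYbound k t ht) hk
end
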